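/- arXiv:2402.02832 — 3 statements merged into one kernel-verified Lean document; each statement's English description precedes it below -/
import Mathlib

section
/- Let P ⊂ ℚ² be a 3-symmetric Fano polygon (admitting a lattice automorphism of order 3) with non-empty basket of R-singularities. Then every edge of P has height at least 2. -/
abbrev Z2 := ℤ × ℤ
abbrev Q2 := ℚ × ℚ

/-- The canonical embedding of lattice points into `ℚ × ℚ`. -/
def toQ (v : Z2) : Q2 := ((v.1 : ℚ), (v.2 : ℚ))

/-- Pairing of a dual lattice vector with a rational point. -/
def dotQ (u : Z2) (x : Q2) : ℚ := (u.1 : ℚ) * x.1 + (u.2 : ℚ) * x.2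

/-- A lattice vector is primitive if its coordinates are coprime. -/
def IsPrimitive (v : Z2) : Prop := Int.gcd v.1 v.2 = 1

/-- Action of an integer matrix on `ℚ × ℚ`. -/
def applyM (G : Matrix (Fin 2) (Fin 2) ℤ) (x : Q2) : Q2 :=
  ((G 0 0 : ℚ) * x.1 + (G 0 1 : ℚ) * x.2, (G 1 0 : ℚ) * x.1 + (G 1 1 : ℚ) * x.2)

/-- Action of an integer matrix on `ℤ × ℤ`. -/
def applyZ (G : Matrix (Fin 2) (Fin 2) ℤ) (v : Z2) : Z2 :=
  (G 0 0 * v.1 + G 0 1 * v.2, G 1 0 * v.1 + G 1 1 * v.2)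

/-- The convex hull in `ℚ²` of a finite set of lattice points. -/
def hull (V : Finset Z2) : Set Q2 := convexHull ℚ (toQ '' (V : Set Z2))

/-- `V` is the vertex set of a Fano polygon: the origin is in the strict interior of the
convex hull, every vertex is primitive, and the points of `V` are exactly the vertices
(extreme points) of the hull. -/
def IsFanoPolygon (V : Finset Z2) : Prop :=
  (0 : Q2) ∈ interior (hull V) ∧
  (∀ v ∈ V, IsPrimitive v) ∧
  toQ '' (V : Set Z2) = Set.extremePoints ℚ (hull V)

/-- `E` is the edge of `P` with primitive inner normal `u` and height `h`:
`u ≥ -h` holds on `P`, with equality exactly on `E`, and `E` has more than one point. -/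
def IsEdge (P E : Set Q2) (u : Z2) (h : ℤ) : Prop :=
  IsPrimitive u ∧ 0 < h ∧
  (∀ x ∈ P, -(h : ℚ) ≤ dotQ u x) ∧
  E = {x ∈ P | dotQ u x = -(h : ℚ)} ∧
  ∃ a b, a ∈ E ∧ b ∈ E ∧ a ≠ b

/-- The lattice length of an edge: the number of lattice points on it minus one. -/
noncomputable def latticeLength (E : Set Q2) : ℕ :=
  Set.ncard {v : Z2 | toQ v ∈ E} - 1

/-- An edge is long if its lattice length is at least its height. -/
def IsLongEdge (P E : Set Q2) (u : Z2) (h : ℤ) : Prop :=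
  IsEdge P E u h ∧ h ≤ (latticeLength E : ℤ)

/-- `P` has a non-empty basket of R-singularities: some edge has lattice length
not a multiple of its height. -/
def HasRsing (P : Set Q2) : Prop :=
  ∃ E u h, IsEdge P E u h ∧ ¬ (h ∣ (latticeLength E : ℤ))

/-- Central symmetry: `P = -P`. -/
def CentSym (P : Set Q2) : Prop := ∀ x, x ∈ P ↔ -x ∈ P

/-- `G` is a lattice automorphism of `P`. -/
def IsAut (G : Matrix (Fin 2) (Fin 2) ℤ) (P : Set Q2) : Prop :=
  IsUnit G.det ∧ applyM G '' P = P

/-- `P` admits a lattice automorphism of order 3. -/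
def ThreeSym (P : Set Q2) : Prop := ∃ G, IsAut G P ∧ G ^ 3 = 1 ∧ G ≠ 1

/-- `P` is symmetric: the fixed-point set of its automorphism group is `{0}`. -/
def SymmetricPolygon (P : Set Q2) : Prop :=
  {x : Q2 | ∀ G, IsAut G P → applyM G x = x} = {0}

-- ===== auxiliary definitions and lemmas =====
-- auxiliary
def dotZ (u z : Z2) : ℤ := u.1 * z.1 + u.2 * z.2
def alF (u z : Z2) : ℤ := -(dotZ u z)
def beF (v z : Z2) : ℤ := v.2 * z.1 - v.1 * z.2

lemma toQ_inj : Function.Injective toQ := by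
  rintro ⟨a, b⟩ ⟨c, d⟩ h
  simp only [toQ, Prod.mk.injEq] at h
  exact Prod.ext (by exact_mod_cast h.1) (by exact_mod_cast h.2)

lemma dotQ_toQ (u z : Z2) : dotQ u (toQ z) = (dotZ u z : ℚ) := by
  simp [dotQ, toQ, dotZ]

lemma toQ_applyZ (G : Matrix (Fin 2) (Fin 2) ℤ) (z : Z2) :
    toQ (applyZ G z) = applyM G (toQ z) := by
  simp [toQ, applyZ, applyM]

lemma mem_hull_of_mem {V : Finset Z2} {z : Z2} (hz : z ∈ V) : toQ z ∈ hull V :=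
  subset_convexHull ℚ _ ⟨z, hz, rfl⟩

noncomputable def dotL (u : Z2) : Q2 →ₗ[ℚ] ℚ :=
  (u.1 : ℚ) • (LinearMap.fst ℚ ℚ ℚ) + (u.2 : ℚ) • (LinearMap.snd ℚ ℚ ℚ)

lemma dotL_apply (u : Z2) (x : Q2) : dotL u x = dotQ u x := by
  simp [dotL, dotQ]

/-- Every edge contains two distinct lattice points of V. -/
lemma edge_two_lattice (V : Finset Z2) {E : Set Q2} {u : Z2} {h : ℤ}
    (hE : IsEdge (hull V) E u h) :
    ∃ z₁ ∈ V, ∃ z₂ ∈ V, z₁ ≠ z₂ ∧ dotZ u z₁ = -h ∧ dotZ u z₂ = -h := by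
  obtain ⟨-, -, hge, hEeq, x, y, hx, hy, hxy⟩ := hE
  set s : Finset Q2 := V.image toQ with hsdef
  have hs : hull V = convexHull ℚ (↑s : Set Q2) := by
    rw [hull, hsdef, Finset.coe_image]
  set S : Finset Q2 := s.filter (fun z => dotQ u z = -(h : ℚ)) with hSdef
  have key : ∀ p ∈ E, p ∈ convexHull ℚ (↑S : Set Q2) := by
    intro p hp
    rw [hEeq] at hp
    obtain ⟨hpP, hpd⟩ := hp
    rw [hs, Finset.convexHull_eq] at hpP
    obtain ⟨wt, hw0, hw1, hwc⟩ := hpP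
    have hdle : ∀ z ∈ s, -(h:ℚ) ≤ dotQ u z := by
      intro z hz
      exact hge z (by rw [hs]; exact subset_convexHull ℚ _ hz)
    have hsum : ∑ z ∈ s, wt z * (dotQ u z + h) = 0 := by
      have hc : s.centerMass wt id = ∑ z ∈ s, wt z • id z :=
        Finset.centerMass_eq_of_sum_1 _ _ hw1
      have hdp : dotQ u p = ∑ z ∈ s, wt z * dotQ u z := by
        rw [← hwc, hc, ← dotL_apply, map_sum]
        simp [dotL_apply, smul_eq_mul]
      have expand : ∑ z ∈ s, wt z * (dotQ u z + h)
          = (∑ z ∈ s, wt z * dotQ u z) + (∑ z ∈ s, wt z) * h := by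
        rw [Finset.sum_mul, ← Finset.sum_add_distrib]
        exact Finset.sum_congr rfl (fun z _ => by ring)
      rw [expand, ← hdp, hw1, hpd]
      ring
    have hterm : ∀ z ∈ s, wt z ≠ 0 → dotQ u z = -(h : ℚ) := by
      intro z hz hwz
      have h0 : ∀ z ∈ s, 0 ≤ wt z * (dotQ u z + h) := fun z hz =>
        mul_nonneg (hw0 z hz) (by linarith [hdle z hz])
      have := (Finset.sum_eq_zero_iff_of_nonneg h0).1 hsum z hz
      have hwpos : 0 < wt z := lt_of_le_of_ne (hw0 z hz) (Ne.symm hwz)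
      have : dotQ u z + h = 0 := by
        rcases mul_eq_zero.1 this with h' | h'
        · exact absurd h' hwz
        · exact h'
      linarith
    -- p is in the hull of S
    have hfs : s.filter (fun z => wt z ≠ 0) ⊆ S := by
      intro z hz
      rw [Finset.mem_filter] at hz ⊢
      exact ⟨hz.1, hterm z hz.1 hz.2⟩
    have hcm : (s.filter (fun z => wt z ≠ 0)).centerMass wt id = p := by
      rw [Finset.centerMass_filter_ne_zero, hwc]
    rw [← hcm]
    apply Finset.centerMass_mem_convexHull _ (fun i hi => hw0 i (Finset.mem_filter.1 hi).1)
    · rw [Finset.sum_filter_ne_zero, hw1]; norm_num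
    · intro i hi
      exact hfs hi
  -- S has at least two elements
  have hScard : 1 < S.card := by
    by_contra hc
    push_neg at hc
    interval_cases hSc : S.card
    · have : (↑S : Set Q2) = ∅ := by
        rw [Finset.card_eq_zero] at hSc
        simp [hSc]
      have h2 := key x hx
      rw [this, convexHull_empty] at h2
      exact h2
    · obtain ⟨a, ha⟩ := Finset.card_eq_one.1 hSc
      have hxa := key x hx
      have hya := key y hy
      rw [ha] at hxa hya
      simp [convexHull_singleton] at hxa hya
      exact hxy (hxa.trans hya.symm)
  obtain ⟨a, ha, b, hb, hab⟩ := Finset.one_lt_card.1 hScard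
  rw [hSdef, Finset.mem_filter, hsdef, Finset.mem_image] at ha hb
  obtain ⟨⟨z₁, hz₁, rfl⟩, hda⟩ := ha
  obtain ⟨⟨z₂, hz₂, rfl⟩, hdb⟩ := hb
  rw [dotQ_toQ] at hda hdb
  refine ⟨z₁, hz₁, z₂, hz₂, fun hzz => hab (by rw [hzz]), ?_, ?_⟩
  · exact_mod_cast hda
  · exact_mod_cast hdb

lemma order3 (G : Matrix (Fin 2) (Fin 2) ℤ) (h3 : G ^ 3 = 1) (hne : G ≠ 1) :
    G 0 0 + G 1 1 = -1 ∧ G 0 0 * G 1 1 - G 0 1 * G 1 0 = 1 := by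
  have hm : G * G * G = 1 := by rw [← h3, pow_succ, pow_succ, pow_one]
  have e : ∀ i j, (G * G * G) i j = (1 : Matrix (Fin 2) (Fin 2) ℤ) i j :=
    fun i j => by rw [hm]
  have e00 := e 0 0
  have e01 := e 0 1
  have e10 := e 1 0
  have e11 := e 1 1
  simp [Matrix.mul_apply, Fin.sum_univ_two, Matrix.one_apply] at e00 e01 e10 e11
  set A := G 0 0
  set B := G 0 1
  set C := G 1 0
  set D := G 1 1
  -- e01 : B * (A^2 + A*D + D^2 + B*C) = 0 etc (in some arrangement)
  by_cases hK : A * A + A * D + D * D + B * C = 0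
  · have ht : (A + D) ^ 3 = -1 := by linear_combination (2*A + D) * hK - e00
    have htr : A + D = -1 := by nlinarith [sq_nonneg (A + D + 1), sq_nonneg (A + D - 1)]
    constructor
    · exact htr
    · nlinarith [hK, htr]
  · exfalso
    have hB : B = 0 := by
      rcases mul_eq_zero.1 (show B * (A * A + A * D + D * D + B * C) = 0 by linear_combination e01) with h | h
      · exact h
      · exact absurd h hK
    have hC : C = 0 := by
      rcases mul_eq_zero.1 (show C * (A * A + A * D + D * D + B * C) = 0 by linear_combination e10) with h | h
      · exact h
      · exact absurd h hK
    rw [hB, hC] at e00 e11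
    ring_nf at e00 e11
    have hA : A = 1 := by
      rcases lt_trichotomy A 1 with hx | hx | hx
      · exfalso; nlinarith
      · exact hx
      · exfalso; nlinarith
    have hD : D = 1 := by
      rcases lt_trichotomy D 1 with hx | hx | hx
      · exfalso; nlinarith
      · exact hx
      · exfalso; nlinarith
    apply hne
    apply Matrix.ext
    intro i j
    fin_cases i <;> fin_cases j <;>
      simp [Matrix.one_apply] <;> first | exact hA | exact hB | exact hC | exact hD

set_option maxHeartbeats 2000000 in
lemma kb_m2_1 (p q h A1 B1 A2 B2 : ℤ)
    (hc1 : A1 ≤ 1) (hc2 : (-2) * A1 + (1) * B1 ≤ 1) (hc3 : -A1 - ((-2) * A1 + (1) * B1) ≤ 1)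
    (hd1 : A2 ≤ 1) (hd2 : (-2) * A2 + (1) * B2 ≤ 1) (hd3 : -A2 - ((-2) * A2 + (1) * B2) ≤ 1)
    (hne : A1 ≠ A2 ∨ B1 ≠ B2)
    (hz1 : A1 * p + B1 * q = -h) (hz2 : A2 * p + B2 * q = -h)
    (hh : 1 ≤ h) : ∃ m n : ℤ, p = m * h ∧ q = n * h := by
  have e1 : (A1 = -2 ∧ B1 = -3) ∨ (A1 = -1 ∧ B1 = -2) ∨ (A1 = -1 ∧ B1 = -1) ∨ (A1 = 0 ∧ B1 = -1) ∨ (A1 = 0 ∧ B1 = 0) ∨ (A1 = 0 ∧ B1 = 1) ∨ (A1 = 1 ∧ B1 = 0) ∨ (A1 = 1 ∧ B1 = 1) ∨ (A1 = 1 ∧ B1 = 2) ∨ (A1 = 1 ∧ B1 = 3) := by omega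
  have e2 : (A2 = -2 ∧ B2 = -3) ∨ (A2 = -1 ∧ B2 = -2) ∨ (A2 = -1 ∧ B2 = -1) ∨ (A2 = 0 ∧ B2 = -1) ∨ (A2 = 0 ∧ B2 = 0) ∨ (A2 = 0 ∧ B2 = 1) ∨ (A2 = 1 ∧ B2 = 0) ∨ (A2 = 1 ∧ B2 = 1) ∨ (A2 = 1 ∧ B2 = 2) ∨ (A2 = 1 ∧ B2 = 3) := by omega
  clear hc1 hc2 hc3 hd1 hd2 hd3
  rcases e1 with ⟨rfl,rfl⟩|⟨rfl,rfl⟩|⟨rfl,rfl⟩|⟨rfl,rfl⟩|⟨rfl,rfl⟩|⟨rfl,rfl⟩|⟨rfl,rfl⟩|⟨rfl,rfl⟩|⟨rfl,rfl⟩|⟨rfl,rfl⟩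
  · rcases e2 with ⟨rfl,rfl⟩|⟨rfl,rfl⟩|⟨rfl,rfl⟩|⟨rfl,rfl⟩|⟨rfl,rfl⟩|⟨rfl,rfl⟩|⟨rfl,rfl⟩|⟨rfl,rfl⟩|⟨rfl,rfl⟩|⟨rfl,rfl⟩
    · exfalso; omega
    · exact ⟨-1, 1, by omega, by omega⟩
    · exact ⟨2, -1, by omega, by omega⟩
    · exact ⟨-1, 1, by omega, by omega⟩
    · exfalso; omega
    · exact ⟨2, -1, by omega, by omega⟩
    · exact ⟨-1, 1, by omega, by omega⟩
    · exact ⟨-4, 3, by omega, by omega⟩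
    · exact ⟨5, -3, by omega, by omega⟩
    · exact ⟨2, -1, by omega, by omega⟩
  · rcases e2 with ⟨rfl,rfl⟩|⟨rfl,rfl⟩|⟨rfl,rfl⟩|⟨rfl,rfl⟩|⟨rfl,rfl⟩|⟨rfl,rfl⟩|⟨rfl,rfl⟩|⟨rfl,rfl⟩|⟨rfl,rfl⟩|⟨rfl,rfl⟩
    · exact ⟨-1, 1, by omega, by omega⟩
    · exfalso; omega
    · exact ⟨1, 0, by omega, by omega⟩
    · exact ⟨-1, 1, by omega, by omega⟩
    · exfalso; omega
    · exact ⟨3, -1, by omega, by omega⟩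
    · exact ⟨-1, 1, by omega, by omega⟩
    · exact ⟨-3, 2, by omega, by omega⟩
    · exfalso; omega
    · exact ⟨5, -2, by omega, by omega⟩
  · rcases e2 with ⟨rfl,rfl⟩|⟨rfl,rfl⟩|⟨rfl,rfl⟩|⟨rfl,rfl⟩|⟨rfl,rfl⟩|⟨rfl,rfl⟩|⟨rfl,rfl⟩|⟨rfl,rfl⟩|⟨rfl,rfl⟩|⟨rfl,rfl⟩
    · exact ⟨2, -1, by omega, by omega⟩
    · exact ⟨1, 0, by omega, by omega⟩
    · exfalso; omega
    · exact ⟨0, 1, by omega, by omega⟩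
    · exfalso; omega
    · exact ⟨2, -1, by omega, by omega⟩
    · exact ⟨-1, 2, by omega, by omega⟩
    · exfalso; omega
    · exact ⟨3, -2, by omega, by omega⟩
    · exact ⟨2, -1, by omega, by omega⟩
  · rcases e2 with ⟨rfl,rfl⟩|⟨rfl,rfl⟩|⟨rfl,rfl⟩|⟨rfl,rfl⟩|⟨rfl,rfl⟩|⟨rfl,rfl⟩|⟨rfl,rfl⟩|⟨rfl,rfl⟩|⟨rfl,rfl⟩|⟨rfl,rfl⟩
    · exact ⟨-1, 1, by omega, by omega⟩
    · exact ⟨-1, 1, by omega, by omega⟩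
    · exact ⟨0, 1, by omega, by omega⟩
    · exfalso; omega
    · exfalso; omega
    · exfalso; omega
    · exact ⟨-1, 1, by omega, by omega⟩
    · exact ⟨-2, 1, by omega, by omega⟩
    · exact ⟨-3, 1, by omega, by omega⟩
    · exact ⟨-4, 1, by omega, by omega⟩
  · rcases e2 with ⟨rfl,rfl⟩|⟨rfl,rfl⟩|⟨rfl,rfl⟩|⟨rfl,rfl⟩|⟨rfl,rfl⟩|⟨rfl,rfl⟩|⟨rfl,rfl⟩|⟨rfl,rfl⟩|⟨rfl,rfl⟩|⟨rfl,rfl⟩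
    · exfalso; omega
    · exfalso; omega
    · exfalso; omega
    · exfalso; omega
    · exfalso; omega
    · exfalso; omega
    · exfalso; omega
    · exfalso; omega
    · exfalso; omega
    · exfalso; omega
  · rcases e2 with ⟨rfl,rfl⟩|⟨rfl,rfl⟩|⟨rfl,rfl⟩|⟨rfl,rfl⟩|⟨rfl,rfl⟩|⟨rfl,rfl⟩|⟨rfl,rfl⟩|⟨rfl,rfl⟩|⟨rfl,rfl⟩|⟨rfl,rfl⟩
    · exact ⟨2, -1, by omega, by omega⟩
    · exact ⟨3, -1, by omega, by omega⟩
    · exact ⟨2, -1, by omega, by omega⟩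
    · exfalso; omega
    · exfalso; omega
    · exfalso; omega
    · exact ⟨-1, -1, by omega, by omega⟩
    · exact ⟨0, -1, by omega, by omega⟩
    · exact ⟨1, -1, by omega, by omega⟩
    · exact ⟨2, -1, by omega, by omega⟩
  · rcases e2 with ⟨rfl,rfl⟩|⟨rfl,rfl⟩|⟨rfl,rfl⟩|⟨rfl,rfl⟩|⟨rfl,rfl⟩|⟨rfl,rfl⟩|⟨rfl,rfl⟩|⟨rfl,rfl⟩|⟨rfl,rfl⟩|⟨rfl,rfl⟩
    · exact ⟨-1, 1, by omega, by omega⟩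
    · exact ⟨-1, 1, by omega, by omega⟩
    · exact ⟨-1, 2, by omega, by omega⟩
    · exact ⟨-1, 1, by omega, by omega⟩
    · exfalso; omega
    · exact ⟨-1, -1, by omega, by omega⟩
    · exfalso; omega
    · exact ⟨-1, 0, by omega, by omega⟩
    · exact ⟨-1, 0, by omega, by omega⟩
    · exact ⟨-1, 0, by omega, by omega⟩
  · rcases e2 with ⟨rfl,rfl⟩|⟨rfl,rfl⟩|⟨rfl,rfl⟩|⟨rfl,rfl⟩|⟨rfl,rfl⟩|⟨rfl,rfl⟩|⟨rfl,rfl⟩|⟨rfl,rfl⟩|⟨rfl,rfl⟩|⟨rfl,rfl⟩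
    · exact ⟨-4, 3, by omega, by omega⟩
    · exact ⟨-3, 2, by omega, by omega⟩
    · exfalso; omega
    · exact ⟨-2, 1, by omega, by omega⟩
    · exfalso; omega
    · exact ⟨0, -1, by omega, by omega⟩
    · exact ⟨-1, 0, by omega, by omega⟩
    · exfalso; omega
    · exact ⟨-1, 0, by omega, by omega⟩
    · exact ⟨-1, 0, by omega, by omega⟩
  · rcases e2 with ⟨rfl,rfl⟩|⟨rfl,rfl⟩|⟨rfl,rfl⟩|⟨rfl,rfl⟩|⟨rfl,rfl⟩|⟨rfl,rfl⟩|⟨rfl,rfl⟩|⟨rfl,rfl⟩|⟨rfl,rfl⟩|⟨rfl,rfl⟩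
    · exact ⟨5, -3, by omega, by omega⟩
    · exfalso; omega
    · exact ⟨3, -2, by omega, by omega⟩
    · exact ⟨-3, 1, by omega, by omega⟩
    · exfalso; omega
    · exact ⟨1, -1, by omega, by omega⟩
    · exact ⟨-1, 0, by omega, by omega⟩
    · exact ⟨-1, 0, by omega, by omega⟩
    · exfalso; omega
    · exact ⟨-1, 0, by omega, by omega⟩
  · rcases e2 with ⟨rfl,rfl⟩|⟨rfl,rfl⟩|⟨rfl,rfl⟩|⟨rfl,rfl⟩|⟨rfl,rfl⟩|⟨rfl,rfl⟩|⟨rfl,rfl⟩|⟨rfl,rfl⟩|⟨rfl,rfl⟩|⟨rfl,rfl⟩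
    · exact ⟨2, -1, by omega, by omega⟩
    · exact ⟨5, -2, by omega, by omega⟩
    · exact ⟨2, -1, by omega, by omega⟩
    · exact ⟨-4, 1, by omega, by omega⟩
    · exfalso; omega
    · exact ⟨2, -1, by omega, by omega⟩
    · exact ⟨-1, 0, by omega, by omega⟩
    · exact ⟨-1, 0, by omega, by omega⟩
    · exact ⟨-1, 0, by omega, by omega⟩
    · exfalso; omega

set_option maxHeartbeats 2000000 in
lemma kb_m2_3 (p q h A1 B1 A2 B2 : ℤ)
    (hc1 : A1 ≤ 1) (hc2 : (-2) * A1 + (3) * B1 ≤ 1) (hc3 : -A1 - ((-2) * A1 + (3) * B1) ≤ 1)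
    (hd1 : A2 ≤ 1) (hd2 : (-2) * A2 + (3) * B2 ≤ 1) (hd3 : -A2 - ((-2) * A2 + (3) * B2) ≤ 1)
    (hne : A1 ≠ A2 ∨ B1 ≠ B2)
    (hz1 : A1 * p + B1 * q = -h) (hz2 : A2 * p + B2 * q = -h)
    (hh : 1 ≤ h) : ∃ m n : ℤ, p = m * h ∧ q = n * h := by
  have e1 : (A1 = -2 ∧ B1 = -1) ∨ (A1 = 0 ∧ B1 = 0) ∨ (A1 = 1 ∧ B1 = 0) ∨ (A1 = 1 ∧ B1 = 1) := by omega
  have e2 : (A2 = -2 ∧ B2 = -1) ∨ (A2 = 0 ∧ B2 = 0) ∨ (A2 = 1 ∧ B2 = 0) ∨ (A2 = 1 ∧ B2 = 1) := by omega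
  clear hc1 hc2 hc3 hd1 hd2 hd3
  rcases e1 with ⟨rfl,rfl⟩|⟨rfl,rfl⟩|⟨rfl,rfl⟩|⟨rfl,rfl⟩
  · rcases e2 with ⟨rfl,rfl⟩|⟨rfl,rfl⟩|⟨rfl,rfl⟩|⟨rfl,rfl⟩
    · exfalso; omega
    · exfalso; omega
    · exact ⟨-1, 3, by omega, by omega⟩
    · exact ⟨2, -3, by omega, by omega⟩
  · rcases e2 with ⟨rfl,rfl⟩|⟨rfl,rfl⟩|⟨rfl,rfl⟩|⟨rfl,rfl⟩
    · exfalso; omega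
    · exfalso; omega
    · exfalso; omega
    · exfalso; omega
  · rcases e2 with ⟨rfl,rfl⟩|⟨rfl,rfl⟩|⟨rfl,rfl⟩|⟨rfl,rfl⟩
    · exact ⟨-1, 3, by omega, by omega⟩
    · exfalso; omega
    · exfalso; omega
    · exact ⟨-1, 0, by omega, by omega⟩
  · rcases e2 with ⟨rfl,rfl⟩|⟨rfl,rfl⟩|⟨rfl,rfl⟩|⟨rfl,rfl⟩
    · exact ⟨2, -3, by omega, by omega⟩
    · exfalso; omega
    · exact ⟨-1, 0, by omega, by omega⟩
    · exfalso; omega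

set_option maxHeartbeats 2000000 in
lemma kb_m1_m1 (p q h A1 B1 A2 B2 : ℤ)
    (hc1 : A1 ≤ 1) (hc2 : (-1) * A1 + (-1) * B1 ≤ 1) (hc3 : -A1 - ((-1) * A1 + (-1) * B1) ≤ 1)
    (hd1 : A2 ≤ 1) (hd2 : (-1) * A2 + (-1) * B2 ≤ 1) (hd3 : -A2 - ((-1) * A2 + (-1) * B2) ≤ 1)
    (hne : A1 ≠ A2 ∨ B1 ≠ B2)
    (hz1 : A1 * p + B1 * q = -h) (hz2 : A2 * p + B2 * q = -h)
    (hh : 1 ≤ h) : ∃ m n : ℤ, p = m * h ∧ q = n * h := by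
  have e1 : (A1 = -2 ∧ B1 = 1) ∨ (A1 = -1 ∧ B1 = 0) ∨ (A1 = -1 ∧ B1 = 1) ∨ (A1 = 0 ∧ B1 = -1) ∨ (A1 = 0 ∧ B1 = 0) ∨ (A1 = 0 ∧ B1 = 1) ∨ (A1 = 1 ∧ B1 = -2) ∨ (A1 = 1 ∧ B1 = -1) ∨ (A1 = 1 ∧ B1 = 0) ∨ (A1 = 1 ∧ B1 = 1) := by omega
  have e2 : (A2 = -2 ∧ B2 = 1) ∨ (A2 = -1 ∧ B2 = 0) ∨ (A2 = -1 ∧ B2 = 1) ∨ (A2 = 0 ∧ B2 = -1) ∨ (A2 = 0 ∧ B2 = 0) ∨ (A2 = 0 ∧ B2 = 1) ∨ (A2 = 1 ∧ B2 = -2) ∨ (A2 = 1 ∧ B2 = -1) ∨ (A2 = 1 ∧ B2 = 0) ∨ (A2 = 1 ∧ B2 = 1) := by omega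
  clear hc1 hc2 hc3 hd1 hd2 hd3
  rcases e1 with ⟨rfl,rfl⟩|⟨rfl,rfl⟩|⟨rfl,rfl⟩|⟨rfl,rfl⟩|⟨rfl,rfl⟩|⟨rfl,rfl⟩|⟨rfl,rfl⟩|⟨rfl,rfl⟩|⟨rfl,rfl⟩|⟨rfl,rfl⟩
  · rcases e2 with ⟨rfl,rfl⟩|⟨rfl,rfl⟩|⟨rfl,rfl⟩|⟨rfl,rfl⟩|⟨rfl,rfl⟩|⟨rfl,rfl⟩|⟨rfl,rfl⟩|⟨rfl,rfl⟩|⟨rfl,rfl⟩|⟨rfl,rfl⟩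
    · exfalso; omega
    · exact ⟨1, 1, by omega, by omega⟩
    · exact ⟨0, -1, by omega, by omega⟩
    · exact ⟨1, 1, by omega, by omega⟩
    · exfalso; omega
    · exact ⟨0, -1, by omega, by omega⟩
    · exact ⟨1, 1, by omega, by omega⟩
    · exact ⟨2, 3, by omega, by omega⟩
    · exact ⟨-1, -3, by omega, by omega⟩
    · exact ⟨0, -1, by omega, by omega⟩
  · rcases e2 with ⟨rfl,rfl⟩|⟨rfl,rfl⟩|⟨rfl,rfl⟩|⟨rfl,rfl⟩|⟨rfl,rfl⟩|⟨rfl,rfl⟩|⟨rfl,rfl⟩|⟨rfl,rfl⟩|⟨rfl,rfl⟩|⟨rfl,rfl⟩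
    · exact ⟨1, 1, by omega, by omega⟩
    · exfalso; omega
    · exact ⟨1, 0, by omega, by omega⟩
    · exact ⟨1, 1, by omega, by omega⟩
    · exfalso; omega
    · exact ⟨1, -1, by omega, by omega⟩
    · exact ⟨1, 1, by omega, by omega⟩
    · exact ⟨1, 2, by omega, by omega⟩
    · exfalso; omega
    · exact ⟨1, -2, by omega, by omega⟩
  · rcases e2 with ⟨rfl,rfl⟩|⟨rfl,rfl⟩|⟨rfl,rfl⟩|⟨rfl,rfl⟩|⟨rfl,rfl⟩|⟨rfl,rfl⟩|⟨rfl,rfl⟩|⟨rfl,rfl⟩|⟨rfl,rfl⟩|⟨rfl,rfl⟩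
    · exact ⟨0, -1, by omega, by omega⟩
    · exact ⟨1, 0, by omega, by omega⟩
    · exfalso; omega
    · exact ⟨2, 1, by omega, by omega⟩
    · exfalso; omega
    · exact ⟨0, -1, by omega, by omega⟩
    · exact ⟨3, 2, by omega, by omega⟩
    · exfalso; omega
    · exact ⟨-1, -2, by omega, by omega⟩
    · exact ⟨0, -1, by omega, by omega⟩
  · rcases e2 with ⟨rfl,rfl⟩|⟨rfl,rfl⟩|⟨rfl,rfl⟩|⟨rfl,rfl⟩|⟨rfl,rfl⟩|⟨rfl,rfl⟩|⟨rfl,rfl⟩|⟨rfl,rfl⟩|⟨rfl,rfl⟩|⟨rfl,rfl⟩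
    · exact ⟨1, 1, by omega, by omega⟩
    · exact ⟨1, 1, by omega, by omega⟩
    · exact ⟨2, 1, by omega, by omega⟩
    · exfalso; omega
    · exfalso; omega
    · exfalso; omega
    · exact ⟨1, 1, by omega, by omega⟩
    · exact ⟨0, 1, by omega, by omega⟩
    · exact ⟨-1, 1, by omega, by omega⟩
    · exact ⟨-2, 1, by omega, by omega⟩
  · rcases e2 with ⟨rfl,rfl⟩|⟨rfl,rfl⟩|⟨rfl,rfl⟩|⟨rfl,rfl⟩|⟨rfl,rfl⟩|⟨rfl,rfl⟩|⟨rfl,rfl⟩|⟨rfl,rfl⟩|⟨rfl,rfl⟩|⟨rfl,rfl⟩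
    · exfalso; omega
    · exfalso; omega
    · exfalso; omega
    · exfalso; omega
    · exfalso; omega
    · exfalso; omega
    · exfalso; omega
    · exfalso; omega
    · exfalso; omega
    · exfalso; omega
  · rcases e2 with ⟨rfl,rfl⟩|⟨rfl,rfl⟩|⟨rfl,rfl⟩|⟨rfl,rfl⟩|⟨rfl,rfl⟩|⟨rfl,rfl⟩|⟨rfl,rfl⟩|⟨rfl,rfl⟩|⟨rfl,rfl⟩|⟨rfl,rfl⟩
    · exact ⟨0, -1, by omega, by omega⟩
    · exact ⟨1, -1, by omega, by omega⟩
    · exact ⟨0, -1, by omega, by omega⟩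
    · exfalso; omega
    · exfalso; omega
    · exfalso; omega
    · exact ⟨-3, -1, by omega, by omega⟩
    · exact ⟨-2, -1, by omega, by omega⟩
    · exact ⟨-1, -1, by omega, by omega⟩
    · exact ⟨0, -1, by omega, by omega⟩
  · rcases e2 with ⟨rfl,rfl⟩|⟨rfl,rfl⟩|⟨rfl,rfl⟩|⟨rfl,rfl⟩|⟨rfl,rfl⟩|⟨rfl,rfl⟩|⟨rfl,rfl⟩|⟨rfl,rfl⟩|⟨rfl,rfl⟩|⟨rfl,rfl⟩
    · exact ⟨1, 1, by omega, by omega⟩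
    · exact ⟨1, 1, by omega, by omega⟩
    · exact ⟨3, 2, by omega, by omega⟩
    · exact ⟨1, 1, by omega, by omega⟩
    · exfalso; omega
    · exact ⟨-3, -1, by omega, by omega⟩
    · exfalso; omega
    · exact ⟨-1, 0, by omega, by omega⟩
    · exact ⟨-1, 0, by omega, by omega⟩
    · exact ⟨-1, 0, by omega, by omega⟩
  · rcases e2 with ⟨rfl,rfl⟩|⟨rfl,rfl⟩|⟨rfl,rfl⟩|⟨rfl,rfl⟩|⟨rfl,rfl⟩|⟨rfl,rfl⟩|⟨rfl,rfl⟩|⟨rfl,rfl⟩|⟨rfl,rfl⟩|⟨rfl,rfl⟩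
    · exact ⟨2, 3, by omega, by omega⟩
    · exact ⟨1, 2, by omega, by omega⟩
    · exfalso; omega
    · exact ⟨0, 1, by omega, by omega⟩
    · exfalso; omega
    · exact ⟨-2, -1, by omega, by omega⟩
    · exact ⟨-1, 0, by omega, by omega⟩
    · exfalso; omega
    · exact ⟨-1, 0, by omega, by omega⟩
    · exact ⟨-1, 0, by omega, by omega⟩
  · rcases e2 with ⟨rfl,rfl⟩|⟨rfl,rfl⟩|⟨rfl,rfl⟩|⟨rfl,rfl⟩|⟨rfl,rfl⟩|⟨rfl,rfl⟩|⟨rfl,rfl⟩|⟨rfl,rfl⟩|⟨rfl,rfl⟩|⟨rfl,rfl⟩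
    · exact ⟨-1, -3, by omega, by omega⟩
    · exfalso; omega
    · exact ⟨-1, -2, by omega, by omega⟩
    · exact ⟨-1, 1, by omega, by omega⟩
    · exfalso; omega
    · exact ⟨-1, -1, by omega, by omega⟩
    · exact ⟨-1, 0, by omega, by omega⟩
    · exact ⟨-1, 0, by omega, by omega⟩
    · exfalso; omega
    · exact ⟨-1, 0, by omega, by omega⟩
  · rcases e2 with ⟨rfl,rfl⟩|⟨rfl,rfl⟩|⟨rfl,rfl⟩|⟨rfl,rfl⟩|⟨rfl,rfl⟩|⟨rfl,rfl⟩|⟨rfl,rfl⟩|⟨rfl,rfl⟩|⟨rfl,rfl⟩|⟨rfl,rfl⟩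
    · exact ⟨0, -1, by omega, by omega⟩
    · exact ⟨1, -2, by omega, by omega⟩
    · exact ⟨0, -1, by omega, by omega⟩
    · exact ⟨-2, 1, by omega, by omega⟩
    · exfalso; omega
    · exact ⟨0, -1, by omega, by omega⟩
    · exact ⟨-1, 0, by omega, by omega⟩
    · exact ⟨-1, 0, by omega, by omega⟩
    · exact ⟨-1, 0, by omega, by omega⟩
    · exfalso; omega

set_option maxHeartbeats 2000000 in
lemma kb_m1_1 (p q h A1 B1 A2 B2 : ℤ)
    (hc1 : A1 ≤ 1) (hc2 : (-1) * A1 + (1) * B1 ≤ 1) (hc3 : -A1 - ((-1) * A1 + (1) * B1) ≤ 1)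
    (hd1 : A2 ≤ 1) (hd2 : (-1) * A2 + (1) * B2 ≤ 1) (hd3 : -A2 - ((-1) * A2 + (1) * B2) ≤ 1)
    (hne : A1 ≠ A2 ∨ B1 ≠ B2)
    (hz1 : A1 * p + B1 * q = -h) (hz2 : A2 * p + B2 * q = -h)
    (hh : 1 ≤ h) : ∃ m n : ℤ, p = m * h ∧ q = n * h := by
  have e1 : (A1 = -2 ∧ B1 = -1) ∨ (A1 = -1 ∧ B1 = -1) ∨ (A1 = -1 ∧ B1 = 0) ∨ (A1 = 0 ∧ B1 = -1) ∨ (A1 = 0 ∧ B1 = 0) ∨ (A1 = 0 ∧ B1 = 1) ∨ (A1 = 1 ∧ B1 = -1) ∨ (A1 = 1 ∧ B1 = 0) ∨ (A1 = 1 ∧ B1 = 1) ∨ (A1 = 1 ∧ B1 = 2) := by omega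
  have e2 : (A2 = -2 ∧ B2 = -1) ∨ (A2 = -1 ∧ B2 = -1) ∨ (A2 = -1 ∧ B2 = 0) ∨ (A2 = 0 ∧ B2 = -1) ∨ (A2 = 0 ∧ B2 = 0) ∨ (A2 = 0 ∧ B2 = 1) ∨ (A2 = 1 ∧ B2 = -1) ∨ (A2 = 1 ∧ B2 = 0) ∨ (A2 = 1 ∧ B2 = 1) ∨ (A2 = 1 ∧ B2 = 2) := by omega
  clear hc1 hc2 hc3 hd1 hd2 hd3
  rcases e1 with ⟨rfl,rfl⟩|⟨rfl,rfl⟩|⟨rfl,rfl⟩|⟨rfl,rfl⟩|⟨rfl,rfl⟩|⟨rfl,rfl⟩|⟨rfl,rfl⟩|⟨rfl,rfl⟩|⟨rfl,rfl⟩|⟨rfl,rfl⟩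
  · rcases e2 with ⟨rfl,rfl⟩|⟨rfl,rfl⟩|⟨rfl,rfl⟩|⟨rfl,rfl⟩|⟨rfl,rfl⟩|⟨rfl,rfl⟩|⟨rfl,rfl⟩|⟨rfl,rfl⟩|⟨rfl,rfl⟩|⟨rfl,rfl⟩
    · exfalso; omega
    · exact ⟨0, 1, by omega, by omega⟩
    · exact ⟨1, -1, by omega, by omega⟩
    · exact ⟨0, 1, by omega, by omega⟩
    · exfalso; omega
    · exact ⟨1, -1, by omega, by omega⟩
    · exact ⟨0, 1, by omega, by omega⟩
    · exact ⟨-1, 3, by omega, by omega⟩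
    · exact ⟨2, -3, by omega, by omega⟩
    · exact ⟨1, -1, by omega, by omega⟩
  · rcases e2 with ⟨rfl,rfl⟩|⟨rfl,rfl⟩|⟨rfl,rfl⟩|⟨rfl,rfl⟩|⟨rfl,rfl⟩|⟨rfl,rfl⟩|⟨rfl,rfl⟩|⟨rfl,rfl⟩|⟨rfl,rfl⟩|⟨rfl,rfl⟩
    · exact ⟨0, 1, by omega, by omega⟩
    · exfalso; omega
    · exact ⟨1, 0, by omega, by omega⟩
    · exact ⟨0, 1, by omega, by omega⟩
    · exfalso; omega
    · exact ⟨2, -1, by omega, by omega⟩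
    · exact ⟨0, 1, by omega, by omega⟩
    · exact ⟨-1, 2, by omega, by omega⟩
    · exfalso; omega
    · exact ⟨3, -2, by omega, by omega⟩
  · rcases e2 with ⟨rfl,rfl⟩|⟨rfl,rfl⟩|⟨rfl,rfl⟩|⟨rfl,rfl⟩|⟨rfl,rfl⟩|⟨rfl,rfl⟩|⟨rfl,rfl⟩|⟨rfl,rfl⟩|⟨rfl,rfl⟩|⟨rfl,rfl⟩
    · exact ⟨1, -1, by omega, by omega⟩
    · exact ⟨1, 0, by omega, by omega⟩
    · exfalso; omega
    · exact ⟨1, 1, by omega, by omega⟩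
    · exfalso; omega
    · exact ⟨1, -1, by omega, by omega⟩
    · exact ⟨1, 2, by omega, by omega⟩
    · exfalso; omega
    · exact ⟨1, -2, by omega, by omega⟩
    · exact ⟨1, -1, by omega, by omega⟩
  · rcases e2 with ⟨rfl,rfl⟩|⟨rfl,rfl⟩|⟨rfl,rfl⟩|⟨rfl,rfl⟩|⟨rfl,rfl⟩|⟨rfl,rfl⟩|⟨rfl,rfl⟩|⟨rfl,rfl⟩|⟨rfl,rfl⟩|⟨rfl,rfl⟩
    · exact ⟨0, 1, by omega, by omega⟩
    · exact ⟨0, 1, by omega, by omega⟩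
    · exact ⟨1, 1, by omega, by omega⟩
    · exfalso; omega
    · exfalso; omega
    · exfalso; omega
    · exact ⟨0, 1, by omega, by omega⟩
    · exact ⟨-1, 1, by omega, by omega⟩
    · exact ⟨-2, 1, by omega, by omega⟩
    · exact ⟨-3, 1, by omega, by omega⟩
  · rcases e2 with ⟨rfl,rfl⟩|⟨rfl,rfl⟩|⟨rfl,rfl⟩|⟨rfl,rfl⟩|⟨rfl,rfl⟩|⟨rfl,rfl⟩|⟨rfl,rfl⟩|⟨rfl,rfl⟩|⟨rfl,rfl⟩|⟨rfl,rfl⟩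
    · exfalso; omega
    · exfalso; omega
    · exfalso; omega
    · exfalso; omega
    · exfalso; omega
    · exfalso; omega
    · exfalso; omega
    · exfalso; omega
    · exfalso; omega
    · exfalso; omega
  · rcases e2 with ⟨rfl,rfl⟩|⟨rfl,rfl⟩|⟨rfl,rfl⟩|⟨rfl,rfl⟩|⟨rfl,rfl⟩|⟨rfl,rfl⟩|⟨rfl,rfl⟩|⟨rfl,rfl⟩|⟨rfl,rfl⟩|⟨rfl,rfl⟩
    · exact ⟨1, -1, by omega, by omega⟩
    · exact ⟨2, -1, by omega, by omega⟩
    · exact ⟨1, -1, by omega, by omega⟩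
    · exfalso; omega
    · exfalso; omega
    · exfalso; omega
    · exact ⟨-2, -1, by omega, by omega⟩
    · exact ⟨-1, -1, by omega, by omega⟩
    · exact ⟨0, -1, by omega, by omega⟩
    · exact ⟨1, -1, by omega, by omega⟩
  · rcases e2 with ⟨rfl,rfl⟩|⟨rfl,rfl⟩|⟨rfl,rfl⟩|⟨rfl,rfl⟩|⟨rfl,rfl⟩|⟨rfl,rfl⟩|⟨rfl,rfl⟩|⟨rfl,rfl⟩|⟨rfl,rfl⟩|⟨rfl,rfl⟩
    · exact ⟨0, 1, by omega, by omega⟩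
    · exact ⟨0, 1, by omega, by omega⟩
    · exact ⟨1, 2, by omega, by omega⟩
    · exact ⟨0, 1, by omega, by omega⟩
    · exfalso; omega
    · exact ⟨-2, -1, by omega, by omega⟩
    · exfalso; omega
    · exact ⟨-1, 0, by omega, by omega⟩
    · exact ⟨-1, 0, by omega, by omega⟩
    · exact ⟨-1, 0, by omega, by omega⟩
  · rcases e2 with ⟨rfl,rfl⟩|⟨rfl,rfl⟩|⟨rfl,rfl⟩|⟨rfl,rfl⟩|⟨rfl,rfl⟩|⟨rfl,rfl⟩|⟨rfl,rfl⟩|⟨rfl,rfl⟩|⟨rfl,rfl⟩|⟨rfl,rfl⟩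
    · exact ⟨-1, 3, by omega, by omega⟩
    · exact ⟨-1, 2, by omega, by omega⟩
    · exfalso; omega
    · exact ⟨-1, 1, by omega, by omega⟩
    · exfalso; omega
    · exact ⟨-1, -1, by omega, by omega⟩
    · exact ⟨-1, 0, by omega, by omega⟩
    · exfalso; omega
    · exact ⟨-1, 0, by omega, by omega⟩
    · exact ⟨-1, 0, by omega, by omega⟩
  · rcases e2 with ⟨rfl,rfl⟩|⟨rfl,rfl⟩|⟨rfl,rfl⟩|⟨rfl,rfl⟩|⟨rfl,rfl⟩|⟨rfl,rfl⟩|⟨rfl,rfl⟩|⟨rfl,rfl⟩|⟨rfl,rfl⟩|⟨rfl,rfl⟩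
    · exact ⟨2, -3, by omega, by omega⟩
    · exfalso; omega
    · exact ⟨1, -2, by omega, by omega⟩
    · exact ⟨-2, 1, by omega, by omega⟩
    · exfalso; omega
    · exact ⟨0, -1, by omega, by omega⟩
    · exact ⟨-1, 0, by omega, by omega⟩
    · exact ⟨-1, 0, by omega, by omega⟩
    · exfalso; omega
    · exact ⟨-1, 0, by omega, by omega⟩
  · rcases e2 with ⟨rfl,rfl⟩|⟨rfl,rfl⟩|⟨rfl,rfl⟩|⟨rfl,rfl⟩|⟨rfl,rfl⟩|⟨rfl,rfl⟩|⟨rfl,rfl⟩|⟨rfl,rfl⟩|⟨rfl,rfl⟩|⟨rfl,rfl⟩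
    · exact ⟨1, -1, by omega, by omega⟩
    · exact ⟨3, -2, by omega, by omega⟩
    · exact ⟨1, -1, by omega, by omega⟩
    · exact ⟨-3, 1, by omega, by omega⟩
    · exfalso; omega
    · exact ⟨1, -1, by omega, by omega⟩
    · exact ⟨-1, 0, by omega, by omega⟩
    · exact ⟨-1, 0, by omega, by omega⟩
    · exact ⟨-1, 0, by omega, by omega⟩
    · exfalso; omega

set_option maxHeartbeats 2000000 in
lemma kb_0_m1 (p q h A1 B1 A2 B2 : ℤ)
    (hc1 : A1 ≤ 1) (hc2 : (0) * A1 + (-1) * B1 ≤ 1) (hc3 : -A1 - ((0) * A1 + (-1) * B1) ≤ 1)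
    (hd1 : A2 ≤ 1) (hd2 : (0) * A2 + (-1) * B2 ≤ 1) (hd3 : -A2 - ((0) * A2 + (-1) * B2) ≤ 1)
    (hne : A1 ≠ A2 ∨ B1 ≠ B2)
    (hz1 : A1 * p + B1 * q = -h) (hz2 : A2 * p + B2 * q = -h)
    (hh : 1 ≤ h) : ∃ m n : ℤ, p = m * h ∧ q = n * h := by
  have e1 : (A1 = -2 ∧ B1 = -1) ∨ (A1 = -1 ∧ B1 = -1) ∨ (A1 = -1 ∧ B1 = 0) ∨ (A1 = 0 ∧ B1 = -1) ∨ (A1 = 0 ∧ B1 = 0) ∨ (A1 = 0 ∧ B1 = 1) ∨ (A1 = 1 ∧ B1 = -1) ∨ (A1 = 1 ∧ B1 = 0) ∨ (A1 = 1 ∧ B1 = 1) ∨ (A1 = 1 ∧ B1 = 2) := by omega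
  have e2 : (A2 = -2 ∧ B2 = -1) ∨ (A2 = -1 ∧ B2 = -1) ∨ (A2 = -1 ∧ B2 = 0) ∨ (A2 = 0 ∧ B2 = -1) ∨ (A2 = 0 ∧ B2 = 0) ∨ (A2 = 0 ∧ B2 = 1) ∨ (A2 = 1 ∧ B2 = -1) ∨ (A2 = 1 ∧ B2 = 0) ∨ (A2 = 1 ∧ B2 = 1) ∨ (A2 = 1 ∧ B2 = 2) := by omega
  clear hc1 hc2 hc3 hd1 hd2 hd3
  rcases e1 with ⟨rfl,rfl⟩|⟨rfl,rfl⟩|⟨rfl,rfl⟩|⟨rfl,rfl⟩|⟨rfl,rfl⟩|⟨rfl,rfl⟩|⟨rfl,rfl⟩|⟨rfl,rfl⟩|⟨rfl,rfl⟩|⟨rfl,rfl⟩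
  · rcases e2 with ⟨rfl,rfl⟩|⟨rfl,rfl⟩|⟨rfl,rfl⟩|⟨rfl,rfl⟩|⟨rfl,rfl⟩|⟨rfl,rfl⟩|⟨rfl,rfl⟩|⟨rfl,rfl⟩|⟨rfl,rfl⟩|⟨rfl,rfl⟩
    · exfalso; omega
    · exact ⟨0, 1, by omega, by omega⟩
    · exact ⟨1, -1, by omega, by omega⟩
    · exact ⟨0, 1, by omega, by omega⟩
    · exfalso; omega
    · exact ⟨1, -1, by omega, by omega⟩
    · exact ⟨0, 1, by omega, by omega⟩
    · exact ⟨-1, 3, by omega, by omega⟩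
    · exact ⟨2, -3, by omega, by omega⟩
    · exact ⟨1, -1, by omega, by omega⟩
  · rcases e2 with ⟨rfl,rfl⟩|⟨rfl,rfl⟩|⟨rfl,rfl⟩|⟨rfl,rfl⟩|⟨rfl,rfl⟩|⟨rfl,rfl⟩|⟨rfl,rfl⟩|⟨rfl,rfl⟩|⟨rfl,rfl⟩|⟨rfl,rfl⟩
    · exact ⟨0, 1, by omega, by omega⟩
    · exfalso; omega
    · exact ⟨1, 0, by omega, by omega⟩
    · exact ⟨0, 1, by omega, by omega⟩
    · exfalso; omega
    · exact ⟨2, -1, by omega, by omega⟩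
    · exact ⟨0, 1, by omega, by omega⟩
    · exact ⟨-1, 2, by omega, by omega⟩
    · exfalso; omega
    · exact ⟨3, -2, by omega, by omega⟩
  · rcases e2 with ⟨rfl,rfl⟩|⟨rfl,rfl⟩|⟨rfl,rfl⟩|⟨rfl,rfl⟩|⟨rfl,rfl⟩|⟨rfl,rfl⟩|⟨rfl,rfl⟩|⟨rfl,rfl⟩|⟨rfl,rfl⟩|⟨rfl,rfl⟩
    · exact ⟨1, -1, by omega, by omega⟩
    · exact ⟨1, 0, by omega, by omega⟩
    · exfalso; omega
    · exact ⟨1, 1, by omega, by omega⟩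
    · exfalso; omega
    · exact ⟨1, -1, by omega, by omega⟩
    · exact ⟨1, 2, by omega, by omega⟩
    · exfalso; omega
    · exact ⟨1, -2, by omega, by omega⟩
    · exact ⟨1, -1, by omega, by omega⟩
  · rcases e2 with ⟨rfl,rfl⟩|⟨rfl,rfl⟩|⟨rfl,rfl⟩|⟨rfl,rfl⟩|⟨rfl,rfl⟩|⟨rfl,rfl⟩|⟨rfl,rfl⟩|⟨rfl,rfl⟩|⟨rfl,rfl⟩|⟨rfl,rfl⟩
    · exact ⟨0, 1, by omega, by omega⟩
    · exact ⟨0, 1, by omega, by omega⟩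
    · exact ⟨1, 1, by omega, by omega⟩
    · exfalso; omega
    · exfalso; omega
    · exfalso; omega
    · exact ⟨0, 1, by omega, by omega⟩
    · exact ⟨-1, 1, by omega, by omega⟩
    · exact ⟨-2, 1, by omega, by omega⟩
    · exact ⟨-3, 1, by omega, by omega⟩
  · rcases e2 with ⟨rfl,rfl⟩|⟨rfl,rfl⟩|⟨rfl,rfl⟩|⟨rfl,rfl⟩|⟨rfl,rfl⟩|⟨rfl,rfl⟩|⟨rfl,rfl⟩|⟨rfl,rfl⟩|⟨rfl,rfl⟩|⟨rfl,rfl⟩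
    · exfalso; omega
    · exfalso; omega
    · exfalso; omega
    · exfalso; omega
    · exfalso; omega
    · exfalso; omega
    · exfalso; omega
    · exfalso; omega
    · exfalso; omega
    · exfalso; omega
  · rcases e2 with ⟨rfl,rfl⟩|⟨rfl,rfl⟩|⟨rfl,rfl⟩|⟨rfl,rfl⟩|⟨rfl,rfl⟩|⟨rfl,rfl⟩|⟨rfl,rfl⟩|⟨rfl,rfl⟩|⟨rfl,rfl⟩|⟨rfl,rfl⟩
    · exact ⟨1, -1, by omega, by omega⟩
    · exact ⟨2, -1, by omega, by omega⟩
    · exact ⟨1, -1, by omega, by omega⟩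
    · exfalso; omega
    · exfalso; omega
    · exfalso; omega
    · exact ⟨-2, -1, by omega, by omega⟩
    · exact ⟨-1, -1, by omega, by omega⟩
    · exact ⟨0, -1, by omega, by omega⟩
    · exact ⟨1, -1, by omega, by omega⟩
  · rcases e2 with ⟨rfl,rfl⟩|⟨rfl,rfl⟩|⟨rfl,rfl⟩|⟨rfl,rfl⟩|⟨rfl,rfl⟩|⟨rfl,rfl⟩|⟨rfl,rfl⟩|⟨rfl,rfl⟩|⟨rfl,rfl⟩|⟨rfl,rfl⟩
    · exact ⟨0, 1, by omega, by omega⟩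
    · exact ⟨0, 1, by omega, by omega⟩
    · exact ⟨1, 2, by omega, by omega⟩
    · exact ⟨0, 1, by omega, by omega⟩
    · exfalso; omega
    · exact ⟨-2, -1, by omega, by omega⟩
    · exfalso; omega
    · exact ⟨-1, 0, by omega, by omega⟩
    · exact ⟨-1, 0, by omega, by omega⟩
    · exact ⟨-1, 0, by omega, by omega⟩
  · rcases e2 with ⟨rfl,rfl⟩|⟨rfl,rfl⟩|⟨rfl,rfl⟩|⟨rfl,rfl⟩|⟨rfl,rfl⟩|⟨rfl,rfl⟩|⟨rfl,rfl⟩|⟨rfl,rfl⟩|⟨rfl,rfl⟩|⟨rfl,rfl⟩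
    · exact ⟨-1, 3, by omega, by omega⟩
    · exact ⟨-1, 2, by omega, by omega⟩
    · exfalso; omega
    · exact ⟨-1, 1, by omega, by omega⟩
    · exfalso; omega
    · exact ⟨-1, -1, by omega, by omega⟩
    · exact ⟨-1, 0, by omega, by omega⟩
    · exfalso; omega
    · exact ⟨-1, 0, by omega, by omega⟩
    · exact ⟨-1, 0, by omega, by omega⟩
  · rcases e2 with ⟨rfl,rfl⟩|⟨rfl,rfl⟩|⟨rfl,rfl⟩|⟨rfl,rfl⟩|⟨rfl,rfl⟩|⟨rfl,rfl⟩|⟨rfl,rfl⟩|⟨rfl,rfl⟩|⟨rfl,rfl⟩|⟨rfl,rfl⟩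
    · exact ⟨2, -3, by omega, by omega⟩
    · exfalso; omega
    · exact ⟨1, -2, by omega, by omega⟩
    · exact ⟨-2, 1, by omega, by omega⟩
    · exfalso; omega
    · exact ⟨0, -1, by omega, by omega⟩
    · exact ⟨-1, 0, by omega, by omega⟩
    · exact ⟨-1, 0, by omega, by omega⟩
    · exfalso; omega
    · exact ⟨-1, 0, by omega, by omega⟩
  · rcases e2 with ⟨rfl,rfl⟩|⟨rfl,rfl⟩|⟨rfl,rfl⟩|⟨rfl,rfl⟩|⟨rfl,rfl⟩|⟨rfl,rfl⟩|⟨rfl,rfl⟩|⟨rfl,rfl⟩|⟨rfl,rfl⟩|⟨rfl,rfl⟩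
    · exact ⟨1, -1, by omega, by omega⟩
    · exact ⟨3, -2, by omega, by omega⟩
    · exact ⟨1, -1, by omega, by omega⟩
    · exact ⟨-3, 1, by omega, by omega⟩
    · exfalso; omega
    · exact ⟨1, -1, by omega, by omega⟩
    · exact ⟨-1, 0, by omega, by omega⟩
    · exact ⟨-1, 0, by omega, by omega⟩
    · exact ⟨-1, 0, by omega, by omega⟩
    · exfalso; omega

set_option maxHeartbeats 2000000 in
lemma kb_0_1 (p q h A1 B1 A2 B2 : ℤ)
    (hc1 : A1 ≤ 1) (hc2 : (0) * A1 + (1) * B1 ≤ 1) (hc3 : -A1 - ((0) * A1 + (1) * B1) ≤ 1)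
    (hd1 : A2 ≤ 1) (hd2 : (0) * A2 + (1) * B2 ≤ 1) (hd3 : -A2 - ((0) * A2 + (1) * B2) ≤ 1)
    (hne : A1 ≠ A2 ∨ B1 ≠ B2)
    (hz1 : A1 * p + B1 * q = -h) (hz2 : A2 * p + B2 * q = -h)
    (hh : 1 ≤ h) : ∃ m n : ℤ, p = m * h ∧ q = n * h := by
  have e1 : (A1 = -2 ∧ B1 = 1) ∨ (A1 = -1 ∧ B1 = 0) ∨ (A1 = -1 ∧ B1 = 1) ∨ (A1 = 0 ∧ B1 = -1) ∨ (A1 = 0 ∧ B1 = 0) ∨ (A1 = 0 ∧ B1 = 1) ∨ (A1 = 1 ∧ B1 = -2) ∨ (A1 = 1 ∧ B1 = -1) ∨ (A1 = 1 ∧ B1 = 0) ∨ (A1 = 1 ∧ B1 = 1) := by omega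
  have e2 : (A2 = -2 ∧ B2 = 1) ∨ (A2 = -1 ∧ B2 = 0) ∨ (A2 = -1 ∧ B2 = 1) ∨ (A2 = 0 ∧ B2 = -1) ∨ (A2 = 0 ∧ B2 = 0) ∨ (A2 = 0 ∧ B2 = 1) ∨ (A2 = 1 ∧ B2 = -2) ∨ (A2 = 1 ∧ B2 = -1) ∨ (A2 = 1 ∧ B2 = 0) ∨ (A2 = 1 ∧ B2 = 1) := by omega
  clear hc1 hc2 hc3 hd1 hd2 hd3
  rcases e1 with ⟨rfl,rfl⟩|⟨rfl,rfl⟩|⟨rfl,rfl⟩|⟨rfl,rfl⟩|⟨rfl,rfl⟩|⟨rfl,rfl⟩|⟨rfl,rfl⟩|⟨rfl,rfl⟩|⟨rfl,rfl⟩|⟨rfl,rfl⟩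
  · rcases e2 with ⟨rfl,rfl⟩|⟨rfl,rfl⟩|⟨rfl,rfl⟩|⟨rfl,rfl⟩|⟨rfl,rfl⟩|⟨rfl,rfl⟩|⟨rfl,rfl⟩|⟨rfl,rfl⟩|⟨rfl,rfl⟩|⟨rfl,rfl⟩
    · exfalso; omega
    · exact ⟨1, 1, by omega, by omega⟩
    · exact ⟨0, -1, by omega, by omega⟩
    · exact ⟨1, 1, by omega, by omega⟩
    · exfalso; omega
    · exact ⟨0, -1, by omega, by omega⟩
    · exact ⟨1, 1, by omega, by omega⟩
    · exact ⟨2, 3, by omega, by omega⟩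
    · exact ⟨-1, -3, by omega, by omega⟩
    · exact ⟨0, -1, by omega, by omega⟩
  · rcases e2 with ⟨rfl,rfl⟩|⟨rfl,rfl⟩|⟨rfl,rfl⟩|⟨rfl,rfl⟩|⟨rfl,rfl⟩|⟨rfl,rfl⟩|⟨rfl,rfl⟩|⟨rfl,rfl⟩|⟨rfl,rfl⟩|⟨rfl,rfl⟩
    · exact ⟨1, 1, by omega, by omega⟩
    · exfalso; omega
    · exact ⟨1, 0, by omega, by omega⟩
    · exact ⟨1, 1, by omega, by omega⟩
    · exfalso; omega
    · exact ⟨1, -1, by omega, by omega⟩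
    · exact ⟨1, 1, by omega, by omega⟩
    · exact ⟨1, 2, by omega, by omega⟩
    · exfalso; omega
    · exact ⟨1, -2, by omega, by omega⟩
  · rcases e2 with ⟨rfl,rfl⟩|⟨rfl,rfl⟩|⟨rfl,rfl⟩|⟨rfl,rfl⟩|⟨rfl,rfl⟩|⟨rfl,rfl⟩|⟨rfl,rfl⟩|⟨rfl,rfl⟩|⟨rfl,rfl⟩|⟨rfl,rfl⟩
    · exact ⟨0, -1, by omega, by omega⟩
    · exact ⟨1, 0, by omega, by omega⟩
    · exfalso; omega
    · exact ⟨2, 1, by omega, by omega⟩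
    · exfalso; omega
    · exact ⟨0, -1, by omega, by omega⟩
    · exact ⟨3, 2, by omega, by omega⟩
    · exfalso; omega
    · exact ⟨-1, -2, by omega, by omega⟩
    · exact ⟨0, -1, by omega, by omega⟩
  · rcases e2 with ⟨rfl,rfl⟩|⟨rfl,rfl⟩|⟨rfl,rfl⟩|⟨rfl,rfl⟩|⟨rfl,rfl⟩|⟨rfl,rfl⟩|⟨rfl,rfl⟩|⟨rfl,rfl⟩|⟨rfl,rfl⟩|⟨rfl,rfl⟩
    · exact ⟨1, 1, by omega, by omega⟩
    · exact ⟨1, 1, by omega, by omega⟩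
    · exact ⟨2, 1, by omega, by omega⟩
    · exfalso; omega
    · exfalso; omega
    · exfalso; omega
    · exact ⟨1, 1, by omega, by omega⟩
    · exact ⟨0, 1, by omega, by omega⟩
    · exact ⟨-1, 1, by omega, by omega⟩
    · exact ⟨-2, 1, by omega, by omega⟩
  · rcases e2 with ⟨rfl,rfl⟩|⟨rfl,rfl⟩|⟨rfl,rfl⟩|⟨rfl,rfl⟩|⟨rfl,rfl⟩|⟨rfl,rfl⟩|⟨rfl,rfl⟩|⟨rfl,rfl⟩|⟨rfl,rfl⟩|⟨rfl,rfl⟩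
    · exfalso; omega
    · exfalso; omega
    · exfalso; omega
    · exfalso; omega
    · exfalso; omega
    · exfalso; omega
    · exfalso; omega
    · exfalso; omega
    · exfalso; omega
    · exfalso; omega
  · rcases e2 with ⟨rfl,rfl⟩|⟨rfl,rfl⟩|⟨rfl,rfl⟩|⟨rfl,rfl⟩|⟨rfl,rfl⟩|⟨rfl,rfl⟩|⟨rfl,rfl⟩|⟨rfl,rfl⟩|⟨rfl,rfl⟩|⟨rfl,rfl⟩
    · exact ⟨0, -1, by omega, by omega⟩
    · exact ⟨1, -1, by omega, by omega⟩
    · exact ⟨0, -1, by omega, by omega⟩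
    · exfalso; omega
    · exfalso; omega
    · exfalso; omega
    · exact ⟨-3, -1, by omega, by omega⟩
    · exact ⟨-2, -1, by omega, by omega⟩
    · exact ⟨-1, -1, by omega, by omega⟩
    · exact ⟨0, -1, by omega, by omega⟩
  · rcases e2 with ⟨rfl,rfl⟩|⟨rfl,rfl⟩|⟨rfl,rfl⟩|⟨rfl,rfl⟩|⟨rfl,rfl⟩|⟨rfl,rfl⟩|⟨rfl,rfl⟩|⟨rfl,rfl⟩|⟨rfl,rfl⟩|⟨rfl,rfl⟩
    · exact ⟨1, 1, by omega, by omega⟩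
    · exact ⟨1, 1, by omega, by omega⟩
    · exact ⟨3, 2, by omega, by omega⟩
    · exact ⟨1, 1, by omega, by omega⟩
    · exfalso; omega
    · exact ⟨-3, -1, by omega, by omega⟩
    · exfalso; omega
    · exact ⟨-1, 0, by omega, by omega⟩
    · exact ⟨-1, 0, by omega, by omega⟩
    · exact ⟨-1, 0, by omega, by omega⟩
  · rcases e2 with ⟨rfl,rfl⟩|⟨rfl,rfl⟩|⟨rfl,rfl⟩|⟨rfl,rfl⟩|⟨rfl,rfl⟩|⟨rfl,rfl⟩|⟨rfl,rfl⟩|⟨rfl,rfl⟩|⟨rfl,rfl⟩|⟨rfl,rfl⟩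
    · exact ⟨2, 3, by omega, by omega⟩
    · exact ⟨1, 2, by omega, by omega⟩
    · exfalso; omega
    · exact ⟨0, 1, by omega, by omega⟩
    · exfalso; omega
    · exact ⟨-2, -1, by omega, by omega⟩
    · exact ⟨-1, 0, by omega, by omega⟩
    · exfalso; omega
    · exact ⟨-1, 0, by omega, by omega⟩
    · exact ⟨-1, 0, by omega, by omega⟩
  · rcases e2 with ⟨rfl,rfl⟩|⟨rfl,rfl⟩|⟨rfl,rfl⟩|⟨rfl,rfl⟩|⟨rfl,rfl⟩|⟨rfl,rfl⟩|⟨rfl,rfl⟩|⟨rfl,rfl⟩|⟨rfl,rfl⟩|⟨rfl,rfl⟩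
    · exact ⟨-1, -3, by omega, by omega⟩
    · exfalso; omega
    · exact ⟨-1, -2, by omega, by omega⟩
    · exact ⟨-1, 1, by omega, by omega⟩
    · exfalso; omega
    · exact ⟨-1, -1, by omega, by omega⟩
    · exact ⟨-1, 0, by omega, by omega⟩
    · exact ⟨-1, 0, by omega, by omega⟩
    · exfalso; omega
    · exact ⟨-1, 0, by omega, by omega⟩
  · rcases e2 with ⟨rfl,rfl⟩|⟨rfl,rfl⟩|⟨rfl,rfl⟩|⟨rfl,rfl⟩|⟨rfl,rfl⟩|⟨rfl,rfl⟩|⟨rfl,rfl⟩|⟨rfl,rfl⟩|⟨rfl,rfl⟩|⟨rfl,rfl⟩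
    · exact ⟨0, -1, by omega, by omega⟩
    · exact ⟨1, -2, by omega, by omega⟩
    · exact ⟨0, -1, by omega, by omega⟩
    · exact ⟨-2, 1, by omega, by omega⟩
    · exfalso; omega
    · exact ⟨0, -1, by omega, by omega⟩
    · exact ⟨-1, 0, by omega, by omega⟩
    · exact ⟨-1, 0, by omega, by omega⟩
    · exact ⟨-1, 0, by omega, by omega⟩
    · exfalso; omega

set_option maxHeartbeats 2000000 in
lemma kb_1_m3 (p q h A1 B1 A2 B2 : ℤ)
    (hc1 : A1 ≤ 1) (hc2 : (1) * A1 + (-3) * B1 ≤ 1) (hc3 : -A1 - ((1) * A1 + (-3) * B1) ≤ 1)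
    (hd1 : A2 ≤ 1) (hd2 : (1) * A2 + (-3) * B2 ≤ 1) (hd3 : -A2 - ((1) * A2 + (-3) * B2) ≤ 1)
    (hne : A1 ≠ A2 ∨ B1 ≠ B2)
    (hz1 : A1 * p + B1 * q = -h) (hz2 : A2 * p + B2 * q = -h)
    (hh : 1 ≤ h) : ∃ m n : ℤ, p = m * h ∧ q = n * h := by
  have e1 : (A1 = -2 ∧ B1 = -1) ∨ (A1 = 0 ∧ B1 = 0) ∨ (A1 = 1 ∧ B1 = 0) ∨ (A1 = 1 ∧ B1 = 1) := by omega
  have e2 : (A2 = -2 ∧ B2 = -1) ∨ (A2 = 0 ∧ B2 = 0) ∨ (A2 = 1 ∧ B2 = 0) ∨ (A2 = 1 ∧ B2 = 1) := by omega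
  clear hc1 hc2 hc3 hd1 hd2 hd3
  rcases e1 with ⟨rfl,rfl⟩|⟨rfl,rfl⟩|⟨rfl,rfl⟩|⟨rfl,rfl⟩
  · rcases e2 with ⟨rfl,rfl⟩|⟨rfl,rfl⟩|⟨rfl,rfl⟩|⟨rfl,rfl⟩
    · exfalso; omega
    · exfalso; omega
    · exact ⟨-1, 3, by omega, by omega⟩
    · exact ⟨2, -3, by omega, by omega⟩
  · rcases e2 with ⟨rfl,rfl⟩|⟨rfl,rfl⟩|⟨rfl,rfl⟩|⟨rfl,rfl⟩
    · exfalso; omega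
    · exfalso; omega
    · exfalso; omega
    · exfalso; omega
  · rcases e2 with ⟨rfl,rfl⟩|⟨rfl,rfl⟩|⟨rfl,rfl⟩|⟨rfl,rfl⟩
    · exact ⟨-1, 3, by omega, by omega⟩
    · exfalso; omega
    · exfalso; omega
    · exact ⟨-1, 0, by omega, by omega⟩
  · rcases e2 with ⟨rfl,rfl⟩|⟨rfl,rfl⟩|⟨rfl,rfl⟩|⟨rfl,rfl⟩
    · exact ⟨2, -3, by omega, by omega⟩
    · exfalso; omega
    · exact ⟨-1, 0, by omega, by omega⟩
    · exfalso; omega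

set_option maxHeartbeats 2000000 in
lemma kb_1_m1 (p q h A1 B1 A2 B2 : ℤ)
    (hc1 : A1 ≤ 1) (hc2 : (1) * A1 + (-1) * B1 ≤ 1) (hc3 : -A1 - ((1) * A1 + (-1) * B1) ≤ 1)
    (hd1 : A2 ≤ 1) (hd2 : (1) * A2 + (-1) * B2 ≤ 1) (hd3 : -A2 - ((1) * A2 + (-1) * B2) ≤ 1)
    (hne : A1 ≠ A2 ∨ B1 ≠ B2)
    (hz1 : A1 * p + B1 * q = -h) (hz2 : A2 * p + B2 * q = -h)
    (hh : 1 ≤ h) : ∃ m n : ℤ, p = m * h ∧ q = n * h := by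
  have e1 : (A1 = -2 ∧ B1 = -3) ∨ (A1 = -1 ∧ B1 = -2) ∨ (A1 = -1 ∧ B1 = -1) ∨ (A1 = 0 ∧ B1 = -1) ∨ (A1 = 0 ∧ B1 = 0) ∨ (A1 = 0 ∧ B1 = 1) ∨ (A1 = 1 ∧ B1 = 0) ∨ (A1 = 1 ∧ B1 = 1) ∨ (A1 = 1 ∧ B1 = 2) ∨ (A1 = 1 ∧ B1 = 3) := by omega
  have e2 : (A2 = -2 ∧ B2 = -3) ∨ (A2 = -1 ∧ B2 = -2) ∨ (A2 = -1 ∧ B2 = -1) ∨ (A2 = 0 ∧ B2 = -1) ∨ (A2 = 0 ∧ B2 = 0) ∨ (A2 = 0 ∧ B2 = 1) ∨ (A2 = 1 ∧ B2 = 0) ∨ (A2 = 1 ∧ B2 = 1) ∨ (A2 = 1 ∧ B2 = 2) ∨ (A2 = 1 ∧ B2 = 3) := by omega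
  clear hc1 hc2 hc3 hd1 hd2 hd3
  rcases e1 with ⟨rfl,rfl⟩|⟨rfl,rfl⟩|⟨rfl,rfl⟩|⟨rfl,rfl⟩|⟨rfl,rfl⟩|⟨rfl,rfl⟩|⟨rfl,rfl⟩|⟨rfl,rfl⟩|⟨rfl,rfl⟩|⟨rfl,rfl⟩
  · rcases e2 with ⟨rfl,rfl⟩|⟨rfl,rfl⟩|⟨rfl,rfl⟩|⟨rfl,rfl⟩|⟨rfl,rfl⟩|⟨rfl,rfl⟩|⟨rfl,rfl⟩|⟨rfl,rfl⟩|⟨rfl,rfl⟩|⟨rfl,rfl⟩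
    · exfalso; omega
    · exact ⟨-1, 1, by omega, by omega⟩
    · exact ⟨2, -1, by omega, by omega⟩
    · exact ⟨-1, 1, by omega, by omega⟩
    · exfalso; omega
    · exact ⟨2, -1, by omega, by omega⟩
    · exact ⟨-1, 1, by omega, by omega⟩
    · exact ⟨-4, 3, by omega, by omega⟩
    · exact ⟨5, -3, by omega, by omega⟩
    · exact ⟨2, -1, by omega, by omega⟩
  · rcases e2 with ⟨rfl,rfl⟩|⟨rfl,rfl⟩|⟨rfl,rfl⟩|⟨rfl,rfl⟩|⟨rfl,rfl⟩|⟨rfl,rfl⟩|⟨rfl,rfl⟩|⟨rfl,rfl⟩|⟨rfl,rfl⟩|⟨rfl,rfl⟩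
    · exact ⟨-1, 1, by omega, by omega⟩
    · exfalso; omega
    · exact ⟨1, 0, by omega, by omega⟩
    · exact ⟨-1, 1, by omega, by omega⟩
    · exfalso; omega
    · exact ⟨3, -1, by omega, by omega⟩
    · exact ⟨-1, 1, by omega, by omega⟩
    · exact ⟨-3, 2, by omega, by omega⟩
    · exfalso; omega
    · exact ⟨5, -2, by omega, by omega⟩
  · rcases e2 with ⟨rfl,rfl⟩|⟨rfl,rfl⟩|⟨rfl,rfl⟩|⟨rfl,rfl⟩|⟨rfl,rfl⟩|⟨rfl,rfl⟩|⟨rfl,rfl⟩|⟨rfl,rfl⟩|⟨rfl,rfl⟩|⟨rfl,rfl⟩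
    · exact ⟨2, -1, by omega, by omega⟩
    · exact ⟨1, 0, by omega, by omega⟩
    · exfalso; omega
    · exact ⟨0, 1, by omega, by omega⟩
    · exfalso; omega
    · exact ⟨2, -1, by omega, by omega⟩
    · exact ⟨-1, 2, by omega, by omega⟩
    · exfalso; omega
    · exact ⟨3, -2, by omega, by omega⟩
    · exact ⟨2, -1, by omega, by omega⟩
  · rcases e2 with ⟨rfl,rfl⟩|⟨rfl,rfl⟩|⟨rfl,rfl⟩|⟨rfl,rfl⟩|⟨rfl,rfl⟩|⟨rfl,rfl⟩|⟨rfl,rfl⟩|⟨rfl,rfl⟩|⟨rfl,rfl⟩|⟨rfl,rfl⟩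
    · exact ⟨-1, 1, by omega, by omega⟩
    · exact ⟨-1, 1, by omega, by omega⟩
    · exact ⟨0, 1, by omega, by omega⟩
    · exfalso; omega
    · exfalso; omega
    · exfalso; omega
    · exact ⟨-1, 1, by omega, by omega⟩
    · exact ⟨-2, 1, by omega, by omega⟩
    · exact ⟨-3, 1, by omega, by omega⟩
    · exact ⟨-4, 1, by omega, by omega⟩
  · rcases e2 with ⟨rfl,rfl⟩|⟨rfl,rfl⟩|⟨rfl,rfl⟩|⟨rfl,rfl⟩|⟨rfl,rfl⟩|⟨rfl,rfl⟩|⟨rfl,rfl⟩|⟨rfl,rfl⟩|⟨rfl,rfl⟩|⟨rfl,rfl⟩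
    · exfalso; omega
    · exfalso; omega
    · exfalso; omega
    · exfalso; omega
    · exfalso; omega
    · exfalso; omega
    · exfalso; omega
    · exfalso; omega
    · exfalso; omega
    · exfalso; omega
  · rcases e2 with ⟨rfl,rfl⟩|⟨rfl,rfl⟩|⟨rfl,rfl⟩|⟨rfl,rfl⟩|⟨rfl,rfl⟩|⟨rfl,rfl⟩|⟨rfl,rfl⟩|⟨rfl,rfl⟩|⟨rfl,rfl⟩|⟨rfl,rfl⟩
    · exact ⟨2, -1, by omega, by omega⟩
    · exact ⟨3, -1, by omega, by omega⟩
    · exact ⟨2, -1, by omega, by omega⟩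
    · exfalso; omega
    · exfalso; omega
    · exfalso; omega
    · exact ⟨-1, -1, by omega, by omega⟩
    · exact ⟨0, -1, by omega, by omega⟩
    · exact ⟨1, -1, by omega, by omega⟩
    · exact ⟨2, -1, by omega, by omega⟩
  · rcases e2 with ⟨rfl,rfl⟩|⟨rfl,rfl⟩|⟨rfl,rfl⟩|⟨rfl,rfl⟩|⟨rfl,rfl⟩|⟨rfl,rfl⟩|⟨rfl,rfl⟩|⟨rfl,rfl⟩|⟨rfl,rfl⟩|⟨rfl,rfl⟩
    · exact ⟨-1, 1, by omega, by omega⟩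
    · exact ⟨-1, 1, by omega, by omega⟩
    · exact ⟨-1, 2, by omega, by omega⟩
    · exact ⟨-1, 1, by omega, by omega⟩
    · exfalso; omega
    · exact ⟨-1, -1, by omega, by omega⟩
    · exfalso; omega
    · exact ⟨-1, 0, by omega, by omega⟩
    · exact ⟨-1, 0, by omega, by omega⟩
    · exact ⟨-1, 0, by omega, by omega⟩
  · rcases e2 with ⟨rfl,rfl⟩|⟨rfl,rfl⟩|⟨rfl,rfl⟩|⟨rfl,rfl⟩|⟨rfl,rfl⟩|⟨rfl,rfl⟩|⟨rfl,rfl⟩|⟨rfl,rfl⟩|⟨rfl,rfl⟩|⟨rfl,rfl⟩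
    · exact ⟨-4, 3, by omega, by omega⟩
    · exact ⟨-3, 2, by omega, by omega⟩
    · exfalso; omega
    · exact ⟨-2, 1, by omega, by omega⟩
    · exfalso; omega
    · exact ⟨0, -1, by omega, by omega⟩
    · exact ⟨-1, 0, by omega, by omega⟩
    · exfalso; omega
    · exact ⟨-1, 0, by omega, by omega⟩
    · exact ⟨-1, 0, by omega, by omega⟩
  · rcases e2 with ⟨rfl,rfl⟩|⟨rfl,rfl⟩|⟨rfl,rfl⟩|⟨rfl,rfl⟩|⟨rfl,rfl⟩|⟨rfl,rfl⟩|⟨rfl,rfl⟩|⟨rfl,rfl⟩|⟨rfl,rfl⟩|⟨rfl,rfl⟩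
    · exact ⟨5, -3, by omega, by omega⟩
    · exfalso; omega
    · exact ⟨3, -2, by omega, by omega⟩
    · exact ⟨-3, 1, by omega, by omega⟩
    · exfalso; omega
    · exact ⟨1, -1, by omega, by omega⟩
    · exact ⟨-1, 0, by omega, by omega⟩
    · exact ⟨-1, 0, by omega, by omega⟩
    · exfalso; omega
    · exact ⟨-1, 0, by omega, by omega⟩
  · rcases e2 with ⟨rfl,rfl⟩|⟨rfl,rfl⟩|⟨rfl,rfl⟩|⟨rfl,rfl⟩|⟨rfl,rfl⟩|⟨rfl,rfl⟩|⟨rfl,rfl⟩|⟨rfl,rfl⟩|⟨rfl,rfl⟩|⟨rfl,rfl⟩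
    · exact ⟨2, -1, by omega, by omega⟩
    · exact ⟨5, -2, by omega, by omega⟩
    · exact ⟨2, -1, by omega, by omega⟩
    · exact ⟨-4, 1, by omega, by omega⟩
    · exfalso; omega
    · exact ⟨2, -1, by omega, by omega⟩
    · exact ⟨-1, 0, by omega, by omega⟩
    · exact ⟨-1, 0, by omega, by omega⟩
    · exact ⟨-1, 0, by omega, by omega⟩
    · exfalso; omega

set_option maxHeartbeats 1000000 in
lemma keybash (a b c p q h A1 B1 A2 B2 : ℤ)
    (haa : a * a + b * c = -1 - a)
    (hv1 : a ≤ 1) (hv2 : -2 ≤ a) (hv3 : a + b ≤ 1) (hv4 : -2 ≤ a + b)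
    (hc1 : A1 ≤ 1) (hc2 : a * A1 + b * B1 ≤ 1) (hc3 : -A1 - (a * A1 + b * B1) ≤ 1)
    (hd1 : A2 ≤ 1) (hd2 : a * A2 + b * B2 ≤ 1) (hd3 : -A2 - (a * A2 + b * B2) ≤ 1)
    (hne : A1 ≠ A2 ∨ B1 ≠ B2)
    (hz1 : A1 * p + B1 * q = -h) (hz2 : A2 * p + B2 * q = -h)
    (hh : 1 ≤ h) : ∃ m n : ℤ, p = m * h ∧ q = n * h := by
  have ha : a = -2 ∨ a = -1 ∨ a = 0 ∨ a = 1 := by omega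
  have hb : b = -3 ∨ b = -2 ∨ b = -1 ∨ b = 0 ∨ b = 1 ∨ b = 2 ∨ b = 3 := by omega
  rcases ha with rfl|rfl|rfl|rfl <;> rcases hb with rfl|rfl|rfl|rfl|rfl|rfl|rfl
  · exfalso; omega
  · exfalso; omega
  · exfalso; omega
  · exfalso; omega
  · exact kb_m2_1 p q h A1 B1 A2 B2 hc1 hc2 hc3 hd1 hd2 hd3 hne hz1 hz2 hh
  · exfalso; omega
  · exact kb_m2_3 p q h A1 B1 A2 B2 hc1 hc2 hc3 hd1 hd2 hd3 hne hz1 hz2 hh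
  · exfalso; omega
  · exfalso; omega
  · exact kb_m1_m1 p q h A1 B1 A2 B2 hc1 hc2 hc3 hd1 hd2 hd3 hne hz1 hz2 hh
  · exfalso; omega
  · exact kb_m1_1 p q h A1 B1 A2 B2 hc1 hc2 hc3 hd1 hd2 hd3 hne hz1 hz2 hh
  · exfalso; omega
  · exfalso; omega
  · exfalso; omega
  · exfalso; omega
  · exact kb_0_m1 p q h A1 B1 A2 B2 hc1 hc2 hc3 hd1 hd2 hd3 hne hz1 hz2 hh
  · exfalso; omega
  · exact kb_0_1 p q h A1 B1 A2 B2 hc1 hc2 hc3 hd1 hd2 hd3 hne hz1 hz2 hh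
  · exfalso; omega
  · exfalso; omega
  · exact kb_1_m3 p q h A1 B1 A2 B2 hc1 hc2 hc3 hd1 hd2 hd3 hne hz1 hz2 hh
  · exfalso; omega
  · exact kb_1_m1 p q h A1 B1 A2 B2 hc1 hc2 hc3 hd1 hd2 hd3 hne hz1 hz2 hh
  · exfalso; omega
  · exfalso; omega
  · exfalso; omega
  · exfalso; omega

/-- Every edge of a 3-symmetric Fano polygon with non-empty basket of R-singularities has
height at least 2. -/
theorem stmt_11 (V : Finset Z2) (hF : IsFanoPolygon V)
    (h3 : ThreeSym (hull V)) (hR : HasRsing (hull V)) :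
    ∀ E u h, IsEdge (hull V) E u h → 2 ≤ h := by
  intro E u h hE
  by_contra hlt
  push_neg at hlt
  have hh1 : h = 1 := by
    have := hE.2.1
    omega
  subst hh1
  -- lattice points on the height-one edge
  obtain ⟨z₁, hz₁V, z₂, hz₂V, hzne, hdz₁, hdz₂⟩ := edge_two_lattice V hE
  obtain ⟨huprim, -, hge, -, -⟩ := hE
  -- the order-three automorphism
  obtain ⟨G, ⟨-, hGP⟩, hG3, hGne⟩ := h3
  have hGmem : ∀ x ∈ hull V, applyM G x ∈ hull V := fun x hx =>
    hGP ▸ Set.mem_image_of_mem _ hx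
  obtain ⟨htrace, hdet⟩ := order3 G hG3 hGne
  have hGG : ∀ z : Z2, applyZ G (applyZ G z)
      = (-z.1 - (applyZ G z).1, -z.2 - (applyZ G z).2) := by
    intro z
    have e1 : G 0 0 * (G 0 0 * z.1 + G 0 1 * z.2) + G 0 1 * (G 1 0 * z.1 + G 1 1 * z.2)
        = -z.1 - (G 0 0 * z.1 + G 0 1 * z.2) := by
      linear_combination (z.1 * G 0 0 + z.2 * G 0 1) * htrace - z.1 * hdet
    have e2 : G 1 0 * (G 0 0 * z.1 + G 0 1 * z.2) + G 1 1 * (G 1 0 * z.1 + G 1 1 * z.2)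
        = -z.2 - (G 1 0 * z.1 + G 1 1 * z.2) := by
      linear_combination (z.1 * G 1 0 + z.2 * G 1 1) * htrace - z.2 * hdet
    exact Prod.ext e1 e2
  -- Bezout coefficients for u
  have hcop : IsCoprime (u.1 : ℤ) u.2 := Int.isCoprime_iff_gcd_eq_one.2 huprim
  obtain ⟨su, tu, hbez⟩ := hcop
  -- the difference of the two lattice points is a multiple of w₀ = (-u.2, u.1)
  have hxy0 : u.1 * (z₂.1 - z₁.1) + u.2 * (z₂.2 - z₁.2) = 0 := by
    simp only [dotZ] at hdz₁ hdz₂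
    ring_nf
    ring_nf at hdz₁ hdz₂
    linarith
  set T : ℤ := su * (z₂.2 - z₁.2) - tu * (z₂.1 - z₁.1) with hTdef
  have hx0 : z₂.1 - z₁.1 = -u.2 * T := by
    rw [hTdef]
    linear_combination (-(z₂.1 - z₁.1)) * hbez + su * hxy0
  have hy0 : z₂.2 - z₁.2 = u.1 * T := by
    rw [hTdef]
    linear_combination (-(z₂.2 - z₁.2)) * hbez + tu * hxy0
  have hT0 : T ≠ 0 := by
    intro hT
    apply hzne
    rw [hT] at hx0 hy0
    exact Prod.ext (by linarith) (by linarith)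
  -- choose v with positive multiple
  obtain ⟨v, hvV, v', hv'V, T', hT'pos, hx', hy', huv⟩ :
      ∃ v, v ∈ V ∧ ∃ v', v' ∈ V ∧ ∃ T' : ℤ, 0 < T' ∧
        v'.1 = v.1 + -u.2 * T' ∧ v'.2 = v.2 + u.1 * T' ∧ dotZ u v = -1 := by
    rcases lt_or_gt_of_ne hT0 with hneg | hpos
    · exact ⟨z₂, hz₂V, z₁, hz₁V, -T, by omega, by linarith, by linarith, hdz₂⟩
    · exact ⟨z₁, hz₁V, z₂, hz₂V, T, hpos, by linarith, by linarith, hdz₁⟩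
  set w : Z2 := (-u.2, u.1) with hwdef
  have huw : dotZ u w = 0 := by simp [dotZ, hwdef]; ring
  have hw1 : w.1 = -u.2 := rfl
  have hw2 : w.2 = u.1 := rfl
  have huv' : u.1 * v.1 + u.2 * v.2 = -1 := huv
  -- v + w lies in the polygon
  have hvwP : toQ (v.1 + w.1, v.2 + w.2) ∈ hull V := by
    have hvP := mem_hull_of_mem hvV
    have hv'P := mem_hull_of_mem hv'V
    have ht : (0:ℚ) < (T' : ℚ) := by exact_mod_cast hT'pos
    have ht1 : (1:ℚ) ≤ (T' : ℚ) := by exact_mod_cast hT'pos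
    have hT'ne : (T' : ℚ) ≠ 0 := ne_of_gt ht
    have hcomb := (convex_convexHull ℚ (toQ '' (V : Set Z2))) hvP hv'P
      (a := 1 - 1/(T':ℚ)) (b := 1/(T':ℚ))
      (by rw [sub_nonneg, div_le_one ht]; exact ht1)
      (by positivity) (by ring)
    have heq : (1 - 1/(T':ℚ)) • toQ v + (1/(T':ℚ)) • toQ v'
        = toQ (v.1 + w.1, v.2 + w.2) := by
      apply Prod.ext
      · show (1 - 1/(T':ℚ)) * (v.1:ℚ) + (1/(T':ℚ)) * (v'.1:ℚ)
            = ((v.1 + w.1 : ℤ) : ℚ)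
        push_cast [hx', hw1]
        field_simp
        ring
      · show (1 - 1/(T':ℚ)) * (v.2:ℚ) + (1/(T':ℚ)) * (v'.2:ℚ)
            = ((v.2 + w.2 : ℤ) : ℚ)
        push_cast [hy', hw2]
        field_simp
        ring
    rw [← heq]
    exact hcomb
  -- coordinates with respect to the basis (v, w)
  have hcoord : ∀ z : Z2, z.1 = alF u z * v.1 + beF v z * w.1
      ∧ z.2 = alF u z * v.2 + beF v z * w.2 := by
    intro z
    rw [hw1, hw2]
    simp only [alF, beF, dotZ]
    constructor
    · linear_combination z.1 * huv'
    · linear_combination z.2 * huv'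
  have halv : alF u v = 1 := by simp [alF, huv]
  have hbev : beF v v = 0 := by simp only [beF]; ring
  have halw : alF u w = 0 := by simp [alF, huw]
  have hbew : beF v w = 1 := by
    rw [beF, hw1, hw2]
    linear_combination -huv'
  -- the matrix of G in the basis (v, w)
  obtain ⟨a, hadef⟩ : ∃ a, alF u (applyZ G v) = a := ⟨_, rfl⟩
  obtain ⟨b, hbdef⟩ : ∃ b, alF u (applyZ G w) = b := ⟨_, rfl⟩
  obtain ⟨c, hcdef⟩ : ∃ c, beF v (applyZ G v) = c := ⟨_, rfl⟩
  have hlin : ∀ z : Z2, alF u (applyZ G z) = a * alF u z + b * beF v z := by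
    intro z
    obtain ⟨A, hA⟩ : ∃ A, alF u z = A := ⟨_, rfl⟩
    obtain ⟨B, hB⟩ : ∃ B, beF v z = B := ⟨_, rfl⟩
    have h1 := (hcoord z).1
    have h2 := (hcoord z).2
    rw [hA, hB] at h1 h2
    rw [hA, hB, ← hadef, ← hbdef]
    simp only [alF, beF, dotZ, applyZ, hw1, hw2]
    rw [h1, h2]
    ring
  -- the key quadratic relation
  have haa : a * a + b * c = -1 - a := by
    have h1 := hlin (applyZ G v)
    rw [hGG v] at h1
    have h2 : alF u (-v.1 - (applyZ G v).1, -v.2 - (applyZ G v).2)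
        = -1 - a := by
      rw [← hadef]
      simp only [alF, dotZ]
      linear_combination huv'
    rw [h2, hadef, hcdef] at h1
    linear_combination -h1
  -- constraints satisfied by every lattice point of the polygon
  have hcon : ∀ z : Z2, toQ z ∈ hull V →
      alF u z ≤ 1 ∧ a * alF u z + b * beF v z ≤ 1 ∧
      -(alF u z) - (a * alF u z + b * beF v z) ≤ 1 := by
    intro z hz
    have k1 : ∀ y : Z2, toQ y ∈ hull V → alF u y ≤ 1 := by
      intro y hy
      have := hge _ hy
      rw [dotQ_toQ] at this
      have h' : (-1 : ℤ) ≤ dotZ u y := by exact_mod_cast this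
      simp only [alF]
      omega
    have m1 : toQ (applyZ G z) ∈ hull V := by
      rw [toQ_applyZ]; exact hGmem _ hz
    have m2 : toQ (applyZ G (applyZ G z)) ∈ hull V := by
      rw [toQ_applyZ, toQ_applyZ]; exact hGmem _ (hGmem _ hz)
    refine ⟨k1 z hz, ?_, ?_⟩
    · have := k1 _ m1
      rwa [hlin z] at this
    · have h2 := k1 _ m2
      rw [hGG z] at h2
      have h3 : alF u (-z.1 - (applyZ G z).1, -z.2 - (applyZ G z).2)
          = -(alF u z) - alF u (applyZ G z) := by
        simp only [alF, dotZ]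
        ring
      rw [h3, hlin z] at h2
      linarith
  -- the bounds on a and a + b
  obtain ⟨-, hv1', hv2'⟩ := hcon v (mem_hull_of_mem hvV)
  rw [halv, hbev] at hv1' hv2'
  have hv1 : a ≤ 1 := by linarith
  have hv2 : -2 ≤ a := by linarith
  have halvw : alF u (v.1 + w.1, v.2 + w.2) = 1 := by
    simp only [alF, dotZ, hwdef]
    linear_combination -huv'
  have hbevw : beF v (v.1 + w.1, v.2 + w.2) = 1 := by
    simp only [beF, hwdef]
    linear_combination -huv'
  obtain ⟨-, hv3', hv4'⟩ := hcon _ hvwP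
  rw [halvw, hbevw] at hv3' hv4'
  have hv3 : a + b ≤ 1 := by linarith
  have hv4 : -2 ≤ a + b := by linarith
  -- now consider the edge with non-trivial residual singularities
  obtain ⟨E', u', h', hE', hnd⟩ := hR
  obtain ⟨y₁, hy₁V, y₂, hy₂V, hyne, hdy₁, hdy₂⟩ := edge_two_lattice V hE'
  obtain ⟨hu'prim, hh'pos, -, -, -⟩ := hE'
  obtain ⟨p, hpdef⟩ : ∃ p, dotZ u' v = p := ⟨_, rfl⟩
  obtain ⟨q, hqdef⟩ : ∃ q, dotZ u' w = q := ⟨_, rfl⟩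
  have hdecomp : ∀ z : Z2, dotZ u' z = alF u z * p + beF v z * q := by
    intro z
    obtain ⟨A, hA⟩ : ∃ A, alF u z = A := ⟨_, rfl⟩
    obtain ⟨B, hB⟩ : ∃ B, beF v z = B := ⟨_, rfl⟩
    have h1 := (hcoord z).1
    have h2 := (hcoord z).2
    rw [hA, hB] at h1 h2
    rw [hA, hB, ← hpdef, ← hqdef]
    simp only [dotZ]
    rw [h1, h2]
    ring
  have heq1 : alF u y₁ * p + beF v y₁ * q = -h' := by
    rw [← hdecomp y₁]; exact hdy₁
  have heq2 : alF u y₂ * p + beF v y₂ * q = -h' := by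
    rw [← hdecomp y₂]; exact hdy₂
  have hcne : alF u y₁ ≠ alF u y₂ ∨ beF v y₁ ≠ beF v y₂ := by
    by_contra hcc
    push_neg at hcc
    apply hyne
    apply Prod.ext
    · rw [(hcoord y₁).1, (hcoord y₂).1, hcc.1, hcc.2]
    · rw [(hcoord y₁).2, (hcoord y₂).2, hcc.1, hcc.2]
  obtain ⟨c11, c12, c13⟩ := hcon y₁ (mem_hull_of_mem hy₁V)
  obtain ⟨c21, c22, c23⟩ := hcon y₂ (mem_hull_of_mem hy₂V)
  -- the multiplication is linear in the coordinates; apply the key lemma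
  have heqz1 : alF u y₁ * p + beF v y₁ * q = -h' := heq1
  obtain ⟨m, n, hm, hn⟩ := keybash a b c p q h'
    (alF u y₁) (beF v y₁) (alF u y₂) (beF v y₂)
    haa hv1 hv2 hv3 hv4 c11 c12 c13 c21 c22 c23 hcne heq1 heq2 (by omega)
  -- h' divides both coordinates of u', hence h' = 1
  have hp : h' ∣ p := ⟨m, by linarith [hm]⟩
  have hq : h' ∣ q := ⟨n, by linarith [hn]⟩
  have hu'1 : u'.1 = alF u (1, 0) * p + beF v (1, 0) * q := by
    have := hdecomp (1, 0)
    simpa [dotZ] using this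
  have hu'2 : u'.2 = alF u (0, 1) * p + beF v (0, 1) * q := by
    have := hdecomp (0, 1)
    simpa [dotZ] using this
  have hd1 : h' ∣ u'.1 := by
    rw [hu'1]
    exact dvd_add (Dvd.dvd.mul_left hp _) (Dvd.dvd.mul_left hq _)
  have hd2 : h' ∣ u'.2 := by
    rw [hu'2]
    exact dvd_add (Dvd.dvd.mul_left hp _) (Dvd.dvd.mul_left hq _)
  have hdg : h' ∣ ((Int.gcd u'.1 u'.2 : ℤ)) := Int.dvd_coe_gcd hd1 hd2
  rw [hu'prim] at hdg
  have : h' = 1 := by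
    have h1 := Int.le_of_dvd one_pos hdg
    omega
  exact hnd (this ▸ one_dvd _)
end

section
/- Let P ⊂ ℚ² be a convex polygon, u ∈ Hom(ℤ²,ℤ) primitive, and n ≥ 2 an integer. Suppose exactly n vertices v of P satisfy u(v) ≤ 0. If P is centrally symmetric (P = -P), then P has at most 2n vertices; if P admits a lattice automorphism of order 3, then P has at most 3n vertices. -/
lemma applyM_mul (A B : Matrix (Fin 2) (Fin 2) ℤ) (x : Q2) :
    applyM (A * B) x = applyM A (applyM B x) := by
  simp only [applyM, Matrix.mul_apply, Fin.sum_univ_two, Prod.mk.injEq]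
  constructor <;> push_cast <;> ring

lemma applyM_one (x : Q2) : applyM 1 x = x := by
  simp [applyM, Matrix.one_apply]

lemma applyM_neg_one (x : Q2) : applyM (-1) x = -x := by
  simp only [applyM, Matrix.neg_apply, Matrix.one_apply, Prod.ext_iff, Prod.fst_neg, Prod.snd_neg]
  norm_num

lemma applyM_smul_add (G : Matrix (Fin 2) (Fin 2) ℤ) (s t : ℚ) (a b : Q2) :
    applyM G (s • a + t • b) = s • applyM G a + t • applyM G b := by
  simp only [applyM, Prod.smul_def, Prod.fst_add, Prod.snd_add, Prod.smul_fst, Prod.smul_snd,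
    smul_eq_mul, Prod.mk.injEq, Prod.mk_add_mk]
  constructor <;> ring

lemma mem_openSegment_applyM {G : Matrix (Fin 2) (Fin 2) ℤ} {x a b : Q2}
    (h : x ∈ openSegment ℚ a b) :
    applyM G x ∈ openSegment ℚ (applyM G a) (applyM G b) := by
  obtain ⟨s, t, hs, ht, hst, rfl⟩ := h
  exact ⟨s, t, hs, ht, hst, (applyM_smul_add G s t a b).symm⟩

lemma extreme_map (G H : Matrix (Fin 2) (Fin 2) ℤ) (hHG : H * G = 1) (hGH : G * H = 1)
    (P : Set Q2) (hP : applyM G '' P = P) {x : Q2} (hx : x ∈ Set.extremePoints ℚ P) :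
    applyM G x ∈ Set.extremePoints ℚ P := by
  have inv1 : ∀ y, applyM H (applyM G y) = y := fun y => by
    rw [← applyM_mul, hHG, applyM_one]
  have inv2 : ∀ y, applyM G (applyM H y) = y := fun y => by
    rw [← applyM_mul, hGH, applyM_one]
  have hmem : ∀ y ∈ P, applyM G y ∈ P := fun y hy => hP ▸ ⟨y, hy, rfl⟩
  have hmemH : ∀ y ∈ P, applyM H y ∈ P := by
    intro y hy
    rw [← hP] at hy
    obtain ⟨z, hz, rfl⟩ := hy
    rwa [inv1]
  refine ⟨hmem x hx.1, ?_⟩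
  intro x1 hx1 x2 hx2 hseg
  have hseg' : x ∈ openSegment ℚ (applyM H x1) (applyM H x2) := by
    have := mem_openSegment_applyM (G := H) hseg
    rwa [inv1] at this
  have h1 := hx.2 (hmemH _ hx1) (hmemH _ hx2) hseg'
  calc x1 = applyM G (applyM H x1) := (inv2 x1).symm
  _ = applyM G x := by rw [h1]

lemma order3_identity (G : Matrix (Fin 2) (Fin 2) ℤ) (hdet : IsUnit G.det) (h3 : G ^ 3 = 1)
    (hne : G ≠ 1) : (1 : Matrix (Fin 2) (Fin 2) ℤ) + G + G * G = 0 := by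
  have h3' : G * G * G = 1 := by
    rw [pow_succ, pow_two] at h3; exact h3
  have hdet1 : G.det = 1 := by
    have h := congrArg Matrix.det h3'
    rw [Matrix.det_mul, Matrix.det_mul, Matrix.det_one] at h
    rcases Int.isUnit_iff.mp hdet with h1 | h1
    · exact h1
    · rw [h1] at h; norm_num at h
  have hd : G 0 0 * G 1 1 - G 0 1 * G 1 0 = 1 := by
    rw [Matrix.det_fin_two] at hdet1; linear_combination hdet1
  have key : ∀ i j, (G * G * G) i j = (1 : Matrix (Fin 2) (Fin 2) ℤ) i j := fun i j => by
    rw [h3']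
  have e00 := key 0 0
  have e01 := key 0 1
  have e10 := key 1 0
  have e11 := key 1 1
  simp only [Matrix.mul_apply, Fin.sum_univ_two, Matrix.one_apply] at e00 e01 e10 e11
  norm_num at e00 e01 e10 e11
  have ht : (G 0 0 + G 1 1) ^ 3 - 3 * (G 0 0 + G 1 1) - 2 = 0 := by
    linear_combination e00 + e11 + 3 * (G 0 0 + G 1 1) * hd
  have hfac : ((G 0 0 + G 1 1) + 1) ^ 2 * ((G 0 0 + G 1 1) - 2) = 0 := by
    linear_combination ht
  rcases mul_eq_zero.mp hfac with hz | hz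
  · -- trace = -1
    have htr : G 0 0 + G 1 1 = -1 := by
      have := pow_eq_zero_iff (n := 2) (by norm_num) |>.mp hz
      linarith
    ext i j
    fin_cases i <;> fin_cases j <;>
      simp only [Matrix.add_apply, Matrix.mul_apply, Fin.sum_univ_two, Matrix.one_apply,
        Matrix.zero_apply, Fin.isValue] <;> norm_num
    · linear_combination G 0 0 * htr - hd
    · linear_combination G 0 1 * htr
    · linear_combination G 1 0 * htr
    · linear_combination G 1 1 * htr - hd
  · -- trace = 2 forces G = 1
    have ht2 : G 0 0 + G 1 1 = 2 := by linarith
    have hb3 : (3 : ℤ) * G 0 1 = 0 := by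
      linear_combination e01 - G 0 1 * (G 0 0 + G 1 1 + 2) * ht2 + G 0 1 * hd
    have hc3 : (3 : ℤ) * G 1 0 = 0 := by
      linear_combination e10 - G 1 0 * (G 0 0 + G 1 1 + 2) * ht2 + G 1 0 * hd
    have hb : G 0 1 = 0 := by omega
    have hc : G 1 0 = 0 := by omega
    have ha1 : (G 0 0 - 1) ^ 2 = 0 := by
      linear_combination -hd - G 1 0 * hb + G 0 0 * ht2
    have ha : G 0 0 = 1 := by
      have := pow_eq_zero_iff (n := 2) (by norm_num) |>.mp ha1
      linarith
    have hdd : G 1 1 = 1 := by linarith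
    exact absurd (by ext i j; fin_cases i <;> fin_cases j <;>
      simp [Matrix.one_apply, ha, hb, hc, hdd]) hne

lemma dotQ_neg (u : Z2) (x : Q2) : dotQ u (-x) = -dotQ u x := by
  simp [dotQ]; ring

/-- If exactly `n ≥ 2` vertices `v` of a convex polygon `P` satisfy `u(v) ≤ 0` for a
primitive `u`, then `P` has at most `2n` vertices when centrally symmetric and at most
`3n` vertices when 3-symmetric. -/
theorem stmt_13 (W : Finset Q2) (P : Set Q2) (hP : P = convexHull ℚ (W : Set Q2))
    (hvert : (W : Set Q2) = Set.extremePoints ℚ P)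
    (u : Z2) (hu : IsPrimitive u) (n : ℕ) (hn : 2 ≤ n)
    (hcount : (W.filter fun v => dotQ u v ≤ 0).card = n) :
    (CentSym P → W.card ≤ 2 * n) ∧ (ThreeSym P → W.card ≤ 3 * n) := by
  have hmemW : ∀ x : Q2, x ∈ W ↔ x ∈ Set.extremePoints ℚ P := by
    intro x
    rw [← Finset.mem_coe, hvert]
  set S := W.filter fun v => dotQ u v ≤ 0 with hS
  constructor
  · -- Centrally symmetric case
    intro hC
    have hPneg : applyM (-1) '' P = P := by
      ext y
      constructor
      · rintro ⟨x, hx, rfl⟩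
        rw [applyM_neg_one]
        exact (hC x).mp hx
      · intro hy
        exact ⟨-y, (hC y).mp hy, by rw [applyM_neg_one, neg_neg]⟩
    have hWneg : ∀ v ∈ W, -v ∈ W := by
      intro v hv
      rw [hmemW] at hv ⊢
      have := extreme_map (-1) (-1) (by simp) (by simp) P hPneg hv
      rwa [applyM_neg_one] at this
    set f : Q2 → Q2 := fun v => if dotQ u v ≤ 0 then v else -v with hf
    have hmaps : ∀ v ∈ W, f v ∈ S := by
      intro v hv
      rw [hS, Finset.mem_filter, hf]
      by_cases h : dotQ u v ≤ 0
      · simp only [if_pos h]; exact ⟨hv, h⟩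
      · simp only [if_neg h]
        exact ⟨hWneg v hv, by rw [dotQ_neg]; linarith⟩
    have hbound : ∀ b ∈ S, (W.filter fun a => f a = b).card ≤ 2 := by
      intro b _
      have hsub : (W.filter fun a => f a = b) ⊆ {b, -b} := by
        intro a ha
        rw [Finset.mem_filter] at ha
        obtain ⟨-, hfa⟩ := ha
        rw [hf] at hfa
        simp only at hfa
        by_cases h : dotQ u a ≤ 0
        · rw [if_pos h] at hfa
          simp [hfa]
        · rw [if_neg h] at hfa
          have : a = -b := by rw [← hfa, neg_neg]
          simp [this]
      calc (W.filter fun a => f a = b).card ≤ ({b, -b} : Finset Q2).card :=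
            Finset.card_le_card hsub
        _ ≤ 2 := (Finset.card_insert_le _ _).trans (by simp)
    calc W.card ≤ 2 * S.card := Finset.card_le_mul_card_image_of_maps_to hmaps 2 hbound
      _ = 2 * n := by rw [hcount]
  · -- Order-3 symmetry case
    rintro ⟨G, ⟨hdet, hGP⟩, h3, hne⟩
    have h3' : G * G * G = 1 := by rw [pow_succ, pow_two] at h3; exact h3
    have hHG : (G * G) * G = 1 := h3'
    have hGH : G * (G * G) = 1 := by rw [← mul_assoc]; exact h3'
    have hid : (1 : Matrix (Fin 2) (Fin 2) ℤ) + G + G * G = 0 := order3_identity G hdet h3 hne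
    have hWG : ∀ v ∈ W, applyM G v ∈ W := by
      intro v hv
      rw [hmemW] at hv ⊢
      exact extreme_map G (G * G) hHG hGH P hGP hv
    have hsum : ∀ x : Q2,
        dotQ u x + dotQ u (applyM G x) + dotQ u (applyM G (applyM G x)) = 0 := by
      intro x
      rw [← applyM_mul]
      have h0 : applyM ((1 : Matrix (Fin 2) (Fin 2) ℤ) + G + G * G) x = 0 := by
        rw [hid]; simp [applyM]
      have hadd : dotQ u x + dotQ u (applyM G x) + dotQ u (applyM (G * G) x) =
          dotQ u (applyM ((1 : Matrix (Fin 2) (Fin 2) ℤ) + G + G * G) x) := by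
        simp only [dotQ, applyM, Matrix.add_apply, Matrix.one_apply]
        norm_num
        push_cast
        ring
      rw [hadd, h0]
      simp [dotQ]
    set f : Q2 → Q2 := fun v =>
      if dotQ u v ≤ 0 then v
      else if dotQ u (applyM G v) ≤ 0 then applyM G v
      else applyM G (applyM G v) with hf
    have hmaps : ∀ v ∈ W, f v ∈ S := by
      intro v hv
      rw [hS, Finset.mem_filter, hf]
      by_cases h1 : dotQ u v ≤ 0
      · simp only [if_pos h1]; exact ⟨hv, h1⟩
      · by_cases h2 : dotQ u (applyM G v) ≤ 0
        · simp only [if_neg h1, if_pos h2]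
          exact ⟨hWG v hv, h2⟩
        · simp only [if_neg h1, if_neg h2]
          refine ⟨hWG _ (hWG v hv), ?_⟩
          have := hsum v
          linarith
    have hbound : ∀ b ∈ S, (W.filter fun a => f a = b).card ≤ 3 := by
      intro b _
      have hsub : (W.filter fun a => f a = b) ⊆ {b, applyM (G * G) b, applyM G b} := by
        intro a ha
        rw [Finset.mem_filter] at ha
        obtain ⟨-, hfa⟩ := ha
        rw [hf] at hfa
        simp only at hfa
        by_cases h1 : dotQ u a ≤ 0
        · rw [if_pos h1] at hfa
          simp [hfa]
        · rw [if_neg h1] at hfa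
          by_cases h2 : dotQ u (applyM G a) ≤ 0
          · rw [if_pos h2] at hfa
            have : a = applyM (G * G) b := by
              rw [← hfa, ← applyM_mul, hHG, applyM_one]
            simp [this]
          · rw [if_neg h2] at hfa
            have : a = applyM G b := by
              rw [← hfa, ← applyM_mul, ← applyM_mul, mul_assoc, hGH, applyM_one]
            simp [this]
      calc (W.filter fun a => f a = b).card
          ≤ ({b, applyM (G * G) b, applyM G b} : Finset Q2).card := Finset.card_le_card hsub
        _ ≤ 3 := (Finset.card_insert_le _ _).trans
            (by simpa using Nat.add_le_add_right (Finset.card_insert_le (applyM (G * G) b) ({applyM G b} : Finset Q2)) 1)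
    calc W.card ≤ 3 * S.card := Finset.card_le_mul_card_image_of_maps_to hmaps 3 hbound
      _ = 3 * n := by rw [hcount]
end

section
/- The quadrilateral P = conv{(-9,-190), (19,27), (15,113), (-13,112)} ⊂ ℚ² is a Fano polygon (origin in its strict interior, primitive vertices), the barycentre of its polar dual P* is the origin, and the only lattice automorphism preserving P is the identity. In particular, P is a Kähler–Einstein Fano polygon which is neither symmetric nor a triangle. -/
open MeasureTheory

/-- The counterexample quadrilateral, as a subset of `ℝ²`. -/
noncomputable def PR : Set (ℝ × ℝ) :=
  convexHull ℝ ({(-9, -190), (19, 27), (15, 113), (-13, 112)} : Set (ℝ × ℝ))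

/-- The polar dual of the counterexample quadrilateral. -/
noncomputable def PstarR : Set (ℝ × ℝ) :=
  {u : ℝ × ℝ | ∀ x ∈ PR, u.1 * x.1 + u.2 * x.2 ≥ -1}

/-- Action of an integer matrix on `ℝ × ℝ`. -/
def applyMR (G : Matrix (Fin 2) (Fin 2) ℤ) (x : ℝ × ℝ) : ℝ × ℝ :=
  ((G 0 0 : ℝ) * x.1 + (G 0 1 : ℝ) * x.2, (G 1 0 : ℝ) * x.1 + (G 1 1 : ℝ) * x.2)

/- ===================== auxiliary material ===================== -/

open MeasureTheory Set

namespace KEP15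

/-- Vertex set of the quadrilateral, in `ℝ²`. -/
def S : Set (ℝ × ℝ) := {(-9, -190), (19, 27), (15, 113), (-13, 112)}

lemma PR_eq : PR = convexHull ℝ S := rfl

lemma mem_PR {v : ℝ × ℝ} (hv : v ∈ S) : v ∈ PR := subset_convexHull ℝ S hv

lemma convex_halfplane (u1 u2 c : ℝ) : Convex ℝ {p : ℝ × ℝ | c ≤ u1 * p.1 + u2 * p.2} := by
  intro p hp q hq s t hs ht hst
  simp only [Set.mem_setOf_eq] at hp hq ⊢
  simp only [Prod.fst_add, Prod.snd_add, Prod.smul_fst, Prod.smul_snd, smul_eq_mul]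
  have hc : s * c + t * c = c := by linear_combination c * hst
  linarith [mul_le_mul_of_nonneg_left hp hs, mul_le_mul_of_nonneg_left hq ht]

lemma PR_bound (u1 u2 c : ℝ)
    (h1 : c ≤ u1 * (-9) + u2 * (-190)) (h2 : c ≤ u1 * 19 + u2 * 27)
    (h3 : c ≤ u1 * 15 + u2 * 113) (h4 : c ≤ u1 * (-13) + u2 * 112) :
    ∀ p ∈ PR, c ≤ u1 * p.1 + u2 * p.2 := by
  intro p hp
  refine convexHull_min ?_ (convex_halfplane u1 u2 c) hp
  intro q hq
  simp only [S, Set.mem_insert_iff, Set.mem_singleton_iff] at hq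
  rcases hq with rfl | rfl | rfl | rfl <;> simpa using by linarith

lemma mem_Pstar (p : ℝ × ℝ) : p ∈ PstarR ↔
    (-1 ≤ p.1 * (-9) + p.2 * (-190) ∧ -1 ≤ p.1 * 19 + p.2 * 27 ∧
     -1 ≤ p.1 * 15 + p.2 * 113 ∧ -1 ≤ p.1 * (-13) + p.2 * 112) := by
  constructor
  · intro h
    have hA := h _ (mem_PR (v := (-9, -190)) (by norm_num [S]))
    have hB := h _ (mem_PR (v := (19, 27)) (by norm_num [S]))
    have hC := h _ (mem_PR (v := (15, 113)) (by norm_num [S]))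
    have hD := h _ (mem_PR (v := (-13, 112)) (by norm_num [S]))
    norm_num at hA hB hC hD
    exact ⟨by linarith, by linarith, by linarith, by linarith⟩
  · rintro ⟨h1, h2, h3, h4⟩ x hx
    have := PR_bound p.1 p.2 (-1) (by linarith) (by linarith) (by linarith) (by linarith) x hx
    linarith

/-- Upper boundary of `P*`. -/
noncomputable def lU (x : ℝ) : ℝ := (1 - 9 * x) / 190

/-- Lower boundary of `P*`. -/
noncomputable def lL (x : ℝ) : ℝ :=
  max ((-1 - 19 * x) / 27) (max ((-1 - 15 * x) / 113) ((-1 + 13 * x) / 112))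

lemma mem_Pstar_iff (x y : ℝ) : (x, y) ∈ PstarR ↔ y ∈ Set.Icc (lL x) (lU x) := by
  rw [mem_Pstar]
  simp only [Set.mem_Icc, lL, lU, max_le_iff]
  constructor
  · rintro ⟨h1, h2, h3, h4⟩
    exact ⟨⟨by linarith, by linarith, by linarith⟩, by linarith⟩
  · rintro ⟨⟨h1, h2, h3⟩, h4⟩
    exact ⟨by linarith, by linarith, by linarith, by linarith⟩

lemma Pstar_eq : PstarR = {p : ℝ × ℝ | p.2 ∈ Set.Icc (lL p.1) (lU p.1)} := by
  ext ⟨x, y⟩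
  exact mem_Pstar_iff x y

lemma cont_lU : Continuous lU := by unfold lU; fun_prop

lemma cont_lL : Continuous lL := by
  unfold lL
  exact Continuous.max (by fun_prop) (Continuous.max (by fun_prop) (by fun_prop))

lemma closed_Pstar : IsClosed PstarR := by
  rw [Pstar_eq]
  have : {p : ℝ × ℝ | p.2 ∈ Set.Icc (lL p.1) (lU p.1)}
      = {p : ℝ × ℝ | lL p.1 ≤ p.2} ∩ {p : ℝ × ℝ | p.2 ≤ lU p.1} := by
    ext p; simp [Set.mem_Icc]
  rw [this]
  exact (isClosed_le (cont_lL.comp continuous_fst) continuous_snd).inter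
    (isClosed_le continuous_snd (cont_lU.comp continuous_fst))

lemma compact_Pstar : IsCompact PstarR := by
  refine IsCompact.of_isClosed_subset (isCompact_Icc (a := ((-1 : ℝ), (-1 : ℝ))) (b := (1, 1)))
    closed_Pstar ?_
  intro p hp
  rw [mem_Pstar] at hp
  obtain ⟨h1, h2, h3, h4⟩ := hp
  rw [Set.mem_Icc, Prod.le_def, Prod.le_def]
  norm_num
  exact ⟨⟨by linarith, by linarith⟩, ⟨by linarith, by linarith⟩⟩

lemma L_le_U : ∀ x ∈ Set.Icc (-31/481 : ℝ) (151/1739), lL x ≤ lU x := by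
  rintro x ⟨hx1, hx2⟩
  unfold lL lU
  exact max_le (by linarith) (max_le (by linarith) (by linarith))

lemma U_lt_L : ∀ x : ℝ, x ∉ Set.Icc (-31/481 : ℝ) (151/1739) → lU x < lL x := by
  intro x hx
  rw [Set.mem_Icc, not_and_or, not_le, not_le] at hx
  unfold lL lU
  rcases hx with h | h
  · exact lt_max_iff.2 (Or.inl (by linarith))
  · exact lt_max_iff.2 (Or.inr (lt_max_iff.2 (Or.inr (by linarith))))

lemma integ_quad (c0 c1 c2 a b : ℝ) :
    (∫ x in a..b, (c0 + c1 * x + c2 * x ^ 2))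
      = c0 * (b - a) + c1 * (b ^ 2 - a ^ 2) / 2 + c2 * (b ^ 3 - a ^ 3) / 3 := by
  have h : ∀ x ∈ Set.uIcc a b,
      HasDerivAt (fun t => c0 * t + (c1 * (t ^ 2 / 2) + c2 * (t ^ 3 / 3)))
        (c0 + c1 * x + c2 * x ^ 2) x := by
    intro x _
    have h1 : HasDerivAt (fun t : ℝ => t) 1 x := hasDerivAt_id x
    have h2 := hasDerivAt_pow 2 x
    have h3 := hasDerivAt_pow 3 x
    have H : HasDerivAt (fun t => c0 * t + (c1 * (t ^ 2 / 2) + c2 * (t ^ 3 / 3))) _ x := (h1.const_mul c0).add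
      (((h2.div_const 2).const_mul c1).add ((h3.div_const 3).const_mul c2))
    convert H using 1
    push_cast
    ring
  rw [intervalIntegral.integral_eq_sub_of_hasDerivAt h
    ((by fun_prop : Continuous fun x : ℝ => c0 + c1 * x + c2 * x ^ 2).intervalIntegrable a b)]
  ring

lemma reduce (f : ℝ × ℝ → ℝ) (hf : Continuous f) (g : ℝ → ℝ)
    (hg : ∀ x : ℝ, (∫ y in Set.Icc (lL x) (lU x), f (x, y))
        = Set.indicator (Set.Icc (-31/481 : ℝ) (151/1739)) g x) :
    (∫ z in PstarR, f z) = ∫ x in Set.Icc (-31/481 : ℝ) (151/1739), g x := by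
  have hmeas : MeasurableSet PstarR := closed_Pstar.measurableSet
  have hIO : IntegrableOn f PstarR := ContinuousOn.integrableOn_compact compact_Pstar hf.continuousOn
  rw [← integral_indicator hmeas, Measure.volume_eq_prod, integral_prod]
  swap
  · rw [← Measure.volume_eq_prod]
    exact (integrable_indicator_iff hmeas).2 hIO
  have key : ∀ x : ℝ, (∫ y, Set.indicator PstarR f (x, y))
      = Set.indicator (Set.Icc (-31/481 : ℝ) (151/1739)) g x := by
    intro x
    have hfe : (fun y => Set.indicator PstarR f (x, y))
        = Set.indicator (Set.Icc (lL x) (lU x)) (fun y => f (x, y)) := by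
      funext y
      by_cases h : (x, y) ∈ PstarR
      · rw [Set.indicator_of_mem h, Set.indicator_of_mem ((mem_Pstar_iff x y).1 h)]
      · rw [Set.indicator_of_notMem h,
          Set.indicator_of_notMem (fun hc => h ((mem_Pstar_iff x y).2 hc))]
    rw [hfe, integral_indicator measurableSet_Icc, hg x]
  simp only [key]
  rw [integral_indicator measurableSet_Icc]

lemma split_integral (h : ℝ → ℝ) (hc : Continuous h) :
    (∫ x in Set.Icc (-31/481 : ℝ) (151/1739), h x)
      = (∫ x in Set.Ioc (-31/481 : ℝ) (-43/871), h x)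
        + (∫ x in Set.Ioc (-43/871 : ℝ) (1/3149), h x)
        + (∫ x in Set.Ioc (1/3149 : ℝ) (151/1739), h x) := by
  rw [integral_Icc_eq_integral_Ioc]
  rw [show Set.Ioc (-31/481 : ℝ) (151/1739)
      = (Set.Ioc (-31/481 : ℝ) (-43/871) ∪ Set.Ioc (-43/871 : ℝ) (1/3149))
        ∪ Set.Ioc (1/3149 : ℝ) (151/1739) by
    rw [Set.Ioc_union_Ioc_eq_Ioc (by norm_num) (by norm_num),
      Set.Ioc_union_Ioc_eq_Ioc (by norm_num) (by norm_num)]]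
  rw [setIntegral_union (Disjoint.union_left (by rw [Set.Ioc_disjoint_Ioc]; norm_num)
        (by rw [Set.Ioc_disjoint_Ioc]; norm_num)) measurableSet_Ioc
      ((hc.integrableOn_Ioc).union (hc.integrableOn_Ioc)) (hc.integrableOn_Ioc),
    setIntegral_union (by rw [Set.Ioc_disjoint_Ioc]; norm_num) measurableSet_Ioc
      (hc.integrableOn_Ioc) (hc.integrableOn_Ioc)]

lemma piece (p q c0 c1 c2 : ℝ) (hpq : p ≤ q) (h : ℝ → ℝ)
    (heq : ∀ x ∈ Set.Ioc p q, h x = c0 + c1 * x + c2 * x ^ 2) :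
    (∫ x in Set.Ioc p q, h x)
      = c0 * (q - p) + c1 * (q ^ 2 - p ^ 2) / 2 + c2 * (q ^ 3 - p ^ 3) / 3 := by
  rw [setIntegral_congr_fun measurableSet_Ioc heq, ← intervalIntegral.integral_of_le hpq,
    integ_quad]

lemma int_fst : (∫ z in PstarR, z.1) = 0 := by
  rw [reduce (fun z => z.1) continuous_fst (fun x => x * (lU x - lL x)) ?hg]
  case hg =>
    intro x
    by_cases hx : x ∈ Set.Icc (-31/481 : ℝ) (151/1739)
    · rw [Set.indicator_of_mem hx, setIntegral_const, Real.volume_real_Icc_of_le (L_le_U x hx), smul_eq_mul]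
      ring
    · rw [Set.indicator_of_notMem hx, Set.Icc_eq_empty (not_le.2 (U_lt_L x hx))]
      simp
  rw [split_integral (fun x => x * (lU x - lL x)) (continuous_id.mul (cont_lU.sub cont_lL))]
  rw [piece _ _ 0 (217/5130) (3367/5130) (by norm_num) _ ?e1,
    piece _ _ 0 (303/21470) (1833/21470) (by norm_num) _ ?e2,
    piece _ _ 0 (151/10640) (-1739/10640) (by norm_num) _ ?e3]
  · norm_num
  case e1 =>
    rintro x ⟨hx1, hx2⟩
    unfold lL lU
    rw [max_eq_left (max_le (by linarith) (by linarith))]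
    ring
  case e2 =>
    rintro x ⟨hx1, hx2⟩
    unfold lL lU
    rw [max_eq_right (le_max_iff.2 (Or.inl (by linarith))), max_eq_left (by linarith)]
    ring
  case e3 =>
    rintro x ⟨hx1, hx2⟩
    unfold lL lU
    rw [max_eq_right (le_max_iff.2 (Or.inr (by linarith))), max_eq_right (by linarith)]
    ring

lemma int_snd : (∫ z in PstarR, z.2) = 0 := by
  rw [reduce (fun z => z.2) continuous_snd (fun x => (lU x ^ 2 - lL x ^ 2) / 2) ?hg]
  case hg =>
    intro x
    by_cases hx : x ∈ Set.Icc (-31/481 : ℝ) (151/1739)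
    · rw [Set.indicator_of_mem hx, integral_Icc_eq_integral_Ioc,
        ← intervalIntegral.integral_of_le (L_le_U x hx), integral_id]
    · rw [Set.indicator_of_notMem hx, Set.Icc_eq_empty (not_le.2 (U_lt_L x hx))]
      simp
  rw [split_integral (fun x => (lU x ^ 2 - lL x ^ 2) / 2) (((cont_lU.pow 2).sub (cont_lL.pow 2)).div_const 2)]
  rw [piece _ _ (-35371/52633800) (-692461/26316900) (-12973051/52633800) (by norm_num) _ ?e1,
    piece _ _ (-23331/921921800) (-656421/460960900) (-7088211/921921800) (by norm_num) _ ?e2,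
    piece _ _ (-5889/226419200) (89101/113209600) (-1271209/226419200) (by norm_num) _ ?e3]
  · norm_num
  case e1 =>
    rintro x ⟨hx1, hx2⟩
    unfold lL lU
    rw [max_eq_left (max_le (by linarith) (by linarith))]
    ring
  case e2 =>
    rintro x ⟨hx1, hx2⟩
    unfold lL lU
    rw [max_eq_right (le_max_iff.2 (Or.inl (by linarith))), max_eq_left (by linarith)]
    ring
  case e3 =>
    rintro x ⟨hx1, hx2⟩
    unfold lL lU
    rw [max_eq_right (le_max_iff.2 (Or.inr (by linarith))), max_eq_right (by linarith)]
    ring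

lemma part3 : (∫ x in PstarR, x) = (0 : ℝ × ℝ) := by
  have hid : IntegrableOn (fun z : ℝ × ℝ => z) PstarR :=
    ContinuousOn.integrableOn_compact compact_Pstar continuous_id.continuousOn
  have h1 := (ContinuousLinearMap.fst ℝ ℝ ℝ).integral_comp_comm hid
  have h2 := (ContinuousLinearMap.snd ℝ ℝ ℝ).integral_comp_comm hid
  simp only [ContinuousLinearMap.coe_fst', ContinuousLinearMap.coe_snd'] at h1 h2
  have e1 : (∫ x in PstarR, x : ℝ × ℝ).1 = 0 := by
    rw [← h1]; exact int_fst
  have e2 : (∫ x in PstarR, x : ℝ × ℝ).2 = 0 := by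
    rw [← h2]; exact int_snd
  exact Prod.ext e1 e2

/- ------------------- Part 1: interior ------------------- -/

lemma part1 : (0 : ℝ × ℝ) ∈ interior PR := by
  have hconv : Convex ℝ PR := convex_convexHull ℝ S
  have hsub : Set.Ioo (-1 : ℝ) 1 ×ˢ Set.Ioo (-1 : ℝ) 1 ⊆ PR := by
    rintro ⟨x, y⟩ ⟨⟨hx1, hx2⟩, hy1, hy2⟩
    have hA : ((-9 : ℝ), (-190 : ℝ)) ∈ PR := mem_PR (by norm_num [S])
    have hB : ((19 : ℝ), (27 : ℝ)) ∈ PR := mem_PR (by norm_num [S])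
    have hD : ((-13 : ℝ), (112 : ℝ)) ∈ PR := mem_PR (by norm_num [S])
    set w1 : ℝ := (-85 * x - 32 * y + 2479) / 9324 with hw1
    set w2 : ℝ := (302 * x + 4 * y + 3478) / 9324 with hw2
    set w3 : ℝ := (-217 * x + 28 * y + 3367) / 9324 with hw3
    have hw1n : 0 ≤ w1 := by rw [hw1]; apply div_nonneg _ (by norm_num); linarith
    have hw2n : 0 ≤ w2 := by rw [hw2]; apply div_nonneg _ (by norm_num); linarith
    have hw3n : 0 ≤ w3 := by rw [hw3]; apply div_nonneg _ (by norm_num); linarith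
    have h23 : 0 < w2 + w3 := by
      rw [hw2, hw3, ← add_div]
      apply div_pos (by linarith) (by norm_num)
    have hm : ((w2 / (w2 + w3)) • ((19 : ℝ), (27 : ℝ))
        + (w3 / (w2 + w3)) • ((-13 : ℝ), (112 : ℝ))) ∈ PR :=
      hconv hB hD (div_nonneg hw2n h23.le) (div_nonneg hw3n h23.le)
        (by field_simp)
    have hfin := hconv hA hm hw1n h23.le
      (by rw [hw1, hw2, hw3]; ring)
    have hxy : ((x : ℝ), (y : ℝ)) = w1 • ((-9 : ℝ), (-190 : ℝ))
        + (w2 + w3) • ((w2 / (w2 + w3)) • ((19 : ℝ), (27 : ℝ))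
          + (w3 / (w2 + w3)) • ((-13 : ℝ), (112 : ℝ))) := by
      have hne : w2 + w3 ≠ 0 := h23.ne'
      simp only [Prod.smul_mk, smul_eq_mul, Prod.mk_add_mk, Prod.mk.injEq]
      constructor
      · field_simp
        rw [hw1, hw2, hw3]; ring
      · field_simp
        rw [hw1, hw2, hw3]; ring
    rw [hxy]
    exact hfin
  have h0 : (0 : ℝ × ℝ) ∈ Set.Ioo (-1 : ℝ) 1 ×ˢ Set.Ioo (-1 : ℝ) 1 := by
    constructor <;> constructor <;> norm_num
  exact interior_maximal hsub (isOpen_Ioo.prod isOpen_Ioo) h0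

/- ------------------- Part 4: rigidity ------------------- -/

lemma face_aux (v : ℝ × ℝ) (u1 u2 w1 w2 c1 c2 : ℝ)
    (hb1 : ∀ p ∈ PR, c1 ≤ u1 * p.1 + u2 * p.2) (hb2 : ∀ p ∈ PR, c2 ≤ w1 * p.1 + w2 * p.2)
    (hv1 : u1 * v.1 + u2 * v.2 = c1) (hv2 : w1 * v.1 + w2 * v.2 = c2)
    (hdet : u1 * w2 - u2 * w1 ≠ 0) (hvPR : v ∈ PR) :
    v ∈ Set.extremePoints ℝ PR := by
  refine ⟨hvPR, ?_⟩
  intro x1 h1 x2 h2 hseg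
  obtain ⟨s, t, hs, ht, hst, heq⟩ := hseg
  have e1 : s * x1.1 + t * x2.1 = v.1 := by
    have := congrArg Prod.fst heq
    simpa [smul_eq_mul] using this
  have e2 : s * x1.2 + t * x2.2 = v.2 := by
    have := congrArg Prod.snd heq
    simpa [smul_eq_mul] using this
  have A1 := hb1 x1 h1
  have A2 := hb1 x2 h2
  have B1 := hb2 x1 h1
  have B2 := hb2 x2 h2
  have hAsum : s * (u1 * x1.1 + u2 * x1.2 - c1) + t * (u1 * x2.1 + u2 * x2.2 - c1) = 0 := by
    linear_combination u1 * e1 + u2 * e2 + hv1 - c1 * hst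
  have hBsum : s * (w1 * x1.1 + w2 * x1.2 - c2) + t * (w1 * x2.1 + w2 * x2.2 - c2) = 0 := by
    linear_combination w1 * e1 + w2 * e2 + hv2 - c2 * hst
  have zero_of : ∀ p q d1 d2 : ℝ, 0 < p → 0 < q → 0 ≤ d1 → 0 ≤ d2 →
      p * d1 + q * d2 = 0 → d1 = 0 ∧ d2 = 0 := by
    intro p q d1 d2 hp hq hd1 hd2 hsum
    have k1 : 0 ≤ p * d1 := mul_nonneg hp.le hd1
    have k2 : 0 ≤ q * d2 := mul_nonneg hq.le hd2
    have : p * d1 = 0 := by linarith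
    have : d1 = 0 := by
      rcases mul_eq_zero.1 this with h | h
      · exact absurd h hp.ne'
      · exact h
    refine ⟨this, ?_⟩
    have hq2 : q * d2 = 0 := by
      subst this; linarith [hsum]
    rcases mul_eq_zero.1 hq2 with h | h
    · exact absurd h hq.ne'
    · exact h
  obtain ⟨dA1, dA2⟩ := zero_of s t _ _ hs ht (by linarith) (by linarith) hAsum
  obtain ⟨dB1, dB2⟩ := zero_of s t _ _ hs ht (by linarith) (by linarith) hBsum
  have cA1 : u1 * x1.1 + u2 * x1.2 = c1 := by linarith
  have cA2 : u1 * x2.1 + u2 * x2.2 = c1 := by linarith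
  have cB1 : w1 * x1.1 + w2 * x1.2 = c2 := by linarith
  have cB2 : w1 * x2.1 + w2 * x2.2 = c2 := by linarith
  have solve : ∀ z : ℝ × ℝ, u1 * z.1 + u2 * z.2 = c1 → w1 * z.1 + w2 * z.2 = c2 → z = v := by
    intro z hz1 hz2
    have k1 : (u1 * w2 - u2 * w1) * (z.1 - v.1) = 0 := by
      linear_combination w2 * hz1 - u2 * hz2 - w2 * hv1 + u2 * hv2
    have k2 : (u1 * w2 - u2 * w1) * (z.2 - v.2) = 0 := by
      linear_combination u1 * hz2 - w1 * hz1 - u1 * hv2 + w1 * hv1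
    have z1 : z.1 = v.1 := by
      have := (mul_eq_zero.1 k1).resolve_left hdet
      linarith
    have z2 : z.2 = v.2 := by
      have := (mul_eq_zero.1 k2).resolve_left hdet
      linarith
    exact Prod.ext z1 z2
  exact solve x1 cA1 cB1

lemma extreme_eq : Set.extremePoints ℝ PR = S := by
  apply Set.Subset.antisymm
  · rw [PR_eq]
    exact extremePoints_convexHull_subset
  · intro v hv
    simp only [S, Set.mem_insert_iff, Set.mem_singleton_iff] at hv
    have hbAB : ∀ p ∈ PR, (-481 : ℝ) ≤ -31 * p.1 + 4 * p.2 :=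
      PR_bound (-31) 4 (-481) (by norm_num) (by norm_num) (by norm_num) (by norm_num)
    have hbBC : ∀ p ∈ PR, (-871 : ℝ) ≤ -43 * p.1 + -2 * p.2 :=
      PR_bound (-43) (-2) (-871) (by norm_num) (by norm_num) (by norm_num) (by norm_num)
    have hbCD : ∀ p ∈ PR, (-3149 : ℝ) ≤ 1 * p.1 + -28 * p.2 :=
      PR_bound 1 (-28) (-3149) (by norm_num) (by norm_num) (by norm_num) (by norm_num)
    have hbDA : ∀ p ∈ PR, (-1739 : ℝ) ≤ 151 * p.1 + 2 * p.2 :=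
      PR_bound 151 2 (-1739) (by norm_num) (by norm_num) (by norm_num) (by norm_num)
    rcases hv with rfl | rfl | rfl | rfl
    · exact face_aux _ (-31) 4 151 2 (-481) (-1739) hbAB hbDA (by norm_num) (by norm_num)
        (by norm_num) (mem_PR (by norm_num [S]))
    · exact face_aux _ (-31) 4 (-43) (-2) (-481) (-871) hbAB hbBC (by norm_num) (by norm_num)
        (by norm_num) (mem_PR (by norm_num [S]))
    · exact face_aux _ (-43) (-2) 1 (-28) (-871) (-3149) hbBC hbCD (by norm_num) (by norm_num)
        (by norm_num) (mem_PR (by norm_num [S]))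
    · exact face_aux _ 1 (-28) 151 2 (-3149) (-1739) hbCD hbDA (by norm_num) (by norm_num)
        (by norm_num) (mem_PR (by norm_num [S]))

/-- The linear equivalence of `ℝ²` induced by an integer matrix with unit determinant. -/
noncomputable def matEquiv (G : Matrix (Fin 2) (Fin 2) ℤ)
    (h : G 0 0 * G 1 1 - G 0 1 * G 1 0 = 1 ∨ G 0 0 * G 1 1 - G 0 1 * G 1 0 = -1) :
    (ℝ × ℝ) ≃ₗ[ℝ] (ℝ × ℝ) where
  toFun := applyMR G
  invFun := fun q =>
    (((G 0 0 * G 1 1 - G 0 1 * G 1 0 : ℤ) : ℝ) * ((G 1 1 : ℝ) * q.1 - (G 0 1 : ℝ) * q.2),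
     ((G 0 0 * G 1 1 - G 0 1 * G 1 0 : ℤ) : ℝ) * ((G 0 0 : ℝ) * q.2 - (G 1 0 : ℝ) * q.1))
  map_add' := by
    intro p q
    simp only [applyMR, Prod.fst_add, Prod.snd_add, Prod.mk_add_mk, Prod.mk.injEq]
    constructor <;> ring
  map_smul' := by
    intro m p
    simp only [applyMR, Prod.smul_fst, Prod.smul_snd, smul_eq_mul, Prod.smul_mk,
      RingHom.id_apply, Prod.mk.injEq]
    constructor <;> ring
  left_inv := by
    intro ⟨p1, p2⟩
    have hd : ((G 0 0 * G 1 1 - G 0 1 * G 1 0 : ℤ) : ℝ)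
        * ((G 0 0 * G 1 1 - G 0 1 * G 1 0 : ℤ) : ℝ) = 1 := by
      rcases h with h | h <;> rw [h] <;> norm_num
    push_cast at hd ⊢
    simp only [applyMR, Prod.mk.injEq]
    constructor
    · linear_combination p1 * hd
    · linear_combination p2 * hd
  right_inv := by
    intro ⟨p1, p2⟩
    have hd : ((G 0 0 * G 1 1 - G 0 1 * G 1 0 : ℤ) : ℝ)
        * ((G 0 0 * G 1 1 - G 0 1 * G 1 0 : ℤ) : ℝ) = 1 := by
      rcases h with h | h <;> rw [h] <;> norm_num
    push_cast at hd ⊢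
    simp only [applyMR, Prod.mk.injEq]
    constructor
    · linear_combination p1 * hd
    · linear_combination p2 * hd

set_option maxHeartbeats 1000000 in
lemma part4 : ∀ G : Matrix (Fin 2) (Fin 2) ℤ, IsUnit G.det → applyMR G '' PR = PR → G = 1 := by
  intro G hdet himg
  rw [Matrix.det_fin_two, Int.isUnit_iff] at hdet
  set e := matEquiv G hdet with he
  have hcoe : ⇑e = applyMR G := rfl
  have himgS : applyMR G '' S = S := by
    have h := image_extremePoints e PR
    rw [hcoe, himg, extreme_eq] at h
    exact h
  have hmapS : ∀ v ∈ S, applyMR G v ∈ S := by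
    intro v hv
    rw [← himgS]
    exact Set.mem_image_of_mem _ hv
  have toInt : ∀ x1 x2 : ℤ, ∀ y1 y2 : ℤ,
      applyMR G ((x1 : ℝ), (x2 : ℝ)) = ((y1 : ℝ), (y2 : ℝ)) →
      (G 0 0 * x1 + G 0 1 * x2 = y1 ∧ G 1 0 * x1 + G 1 1 * x2 = y2) := by
    intro x1 x2 y1 y2 hxy
    rw [applyMR, Prod.mk.injEq] at hxy
    obtain ⟨hx, hy⟩ := hxy
    have hx' : (G 0 0 : ℝ) * (x1 : ℝ) + (G 0 1 : ℝ) * (x2 : ℝ) = (y1 : ℝ) := by simpa using hx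
    have hy' : (G 1 0 : ℝ) * (x1 : ℝ) + (G 1 1 : ℝ) * (x2 : ℝ) = (y2 : ℝ) := by simpa using hy
    constructor
    · exact_mod_cast hx'
    · exact_mod_cast hy'
  have key : ∀ x1 x2 : ℤ, ((x1 : ℝ), (x2 : ℝ)) ∈ S →
      (G 0 0 * x1 + G 0 1 * x2 = -9 ∧ G 1 0 * x1 + G 1 1 * x2 = -190) ∨
      (G 0 0 * x1 + G 0 1 * x2 = 19 ∧ G 1 0 * x1 + G 1 1 * x2 = 27) ∨
      (G 0 0 * x1 + G 0 1 * x2 = 15 ∧ G 1 0 * x1 + G 1 1 * x2 = 113) ∨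
      (G 0 0 * x1 + G 0 1 * x2 = -13 ∧ G 1 0 * x1 + G 1 1 * x2 = 112) := by
    intro x1 x2 hx
    have h := hmapS _ hx
    simp only [S, Set.mem_insert_iff, Set.mem_singleton_iff] at h
    rcases h with h | h | h | h
    · exact Or.inl (toInt x1 x2 (-9) (-190) (by exact_mod_cast h))
    · exact Or.inr (Or.inl (toInt x1 x2 19 27 (by exact_mod_cast h)))
    · exact Or.inr (Or.inr (Or.inl (toInt x1 x2 15 113 (by exact_mod_cast h))))
    · exact Or.inr (Or.inr (Or.inr (toInt x1 x2 (-13) 112 (by exact_mod_cast h))))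
  have hA := key (-9) (-190) (by norm_num [S])
  have hB := key 19 27 (by norm_num [S])
  have hC := key 15 113 (by norm_num [S])
  have hD := key (-13) 112 (by norm_num [S])
  ext i j
  fin_cases i <;> fin_cases j <;>
    simp only [Matrix.one_apply, Matrix.cons_val', Matrix.cons_val_zero, Matrix.cons_val_one,
      Matrix.head_cons, Matrix.head_fin_const, Matrix.empty_val', Matrix.cons_val_fin_one,
      if_true, if_false] <;>
    norm_num <;> omega

end KEP15

/-- The quadrilateral `P = conv{(-9,-190), (19,27), (15,113), (-13,112)}` is a Fano
polygon, the barycentre of its polar dual is the origin (the integral of the identity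
over `P*` vanishes), and its only lattice automorphism is the identity; so `P` is a
Kähler–Einstein Fano polygon which is neither symmetric nor a triangle. -/

theorem stmt_15 :
    (0 : ℝ × ℝ) ∈ interior PR ∧
    (∀ v ∈ ({(-9, -190), (19, 27), (15, 113), (-13, 112)} : Finset Z2), IsPrimitive v) ∧
    (∫ x in PstarR, x) = (0 : ℝ × ℝ) ∧
    (∀ G : Matrix (Fin 2) (Fin 2) ℤ, IsUnit G.det → applyMR G '' PR = PR → G = 1) := by
  refine ⟨KEP15.part1, ?_, KEP15.part3, KEP15.part4⟩
  intro v hv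
  fin_cases hv <;> (unfold IsPrimitive; decide)
end
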